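/- arXiv:1911.04076 — 7 statements merged into one kernel-verified Lean document; each statement's English description precedes it below -/
import Mathlib

section
/- For any point x in R^n and any set-valued mapping C from R^m to subsets of R^n, the lower limit as u' tends to u of dist(x, C(u')) equals dist(x, limsup_{u'→u} C(u')), where limsup denotes the Painlevé–Kuratowski outer limit. -/
open Filter Topology Pointwise RealInnerProductSpace

section Defs
variable {E F : Type*}
variable [NormedAddCommGroup E] [InnerProductSpace ℝ E]
variable [NormedAddCommGroup F] [InnerProductSpace ℝ F]

/-- Bouligand (contingent) tangent cone, via sequences. -/
def tangentCone' (S : Set E) (x : E) : Set E :=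
  {d | ∃ t : ℕ → ℝ, ∃ v : ℕ → E, (∀ k, 0 < t k) ∧ Tendsto t atTop (𝓝 0) ∧
    Tendsto v atTop (𝓝 d) ∧ ∀ k, x + t k • v k ∈ S}

/-- Outer second-order tangent set. -/
def tangentCone2 (S : Set E) (x d : E) : Set E :=
  {w | ∃ t : ℕ → ℝ, ∃ v : ℕ → E, (∀ k, 0 < t k) ∧ Tendsto t atTop (𝓝 0) ∧
    Tendsto v atTop (𝓝 w) ∧ ∀ k, x + t k • d + ((t k)^2 / 2) • v k ∈ S}

/-- Regular (Fréchet) normal cone. -/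
def frechetNormal (S : Set E) (x : E) : Set E :=
  {v | ∀ ε > (0:ℝ), ∃ δ > (0:ℝ), ∀ y ∈ S, ‖y - x‖ ≤ δ → ⟪v, y - x⟫ ≤ ε * ‖y - x‖}

/-- Limiting (Mordukhovich) normal cone. -/
def limNormal (S : Set E) (x : E) : Set E :=
  {v | ∃ xk vk : ℕ → E, (∀ k, xk k ∈ S) ∧ Tendsto xk atTop (𝓝 x) ∧
    Tendsto vk atTop (𝓝 v) ∧ ∀ k, vk k ∈ frechetNormal S (xk k)}

/-- Directional limiting normal cone. -/
def dirLimNormal (S : Set E) (x d : E) : Set E :=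
  {v | ∃ t : ℕ → ℝ, ∃ dk vk : ℕ → E, (∀ k, 0 < t k) ∧ Tendsto t atTop (𝓝 0) ∧
    Tendsto dk atTop (𝓝 d) ∧ Tendsto vk atTop (𝓝 v) ∧
    ∀ k, vk k ∈ frechetNormal S (x + t k • dk k)}

/-- Directional regular (Clarke) tangent cone. -/
def dirRegTangent (S : Set E) (x d : E) : Set E :=
  {v | ∀ t : ℕ → ℝ, ∀ dk : ℕ → E, (∀ k, 0 < t k) → Tendsto t atTop (𝓝 0) →
    Tendsto dk atTop (𝓝 d) → (∀ k, x + t k • dk k ∈ S) →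
    ∃ vk : ℕ → E, Tendsto vk atTop (𝓝 v) ∧ ∀ k, vk k ∈ tangentCone' S (x + t k • dk k)}

/-- Regular (Clarke) tangent cone, via sequences. -/
def clarkeTangent (S : Set E) (x : E) : Set E :=
  {v | ∀ t : ℕ → ℝ, ∀ xk : ℕ → E, (∀ k, 0 < t k) → Tendsto t atTop (𝓝 0) →
    (∀ k, xk k ∈ S) → Tendsto xk atTop (𝓝 x) →
    ∃ vk : ℕ → E, Tendsto vk atTop (𝓝 v) ∧ ∀ k, xk k + t k • vk k ∈ S}

/-- Polar cone. -/
def polarCone (K : Set E) : Set E := {v | ∀ w ∈ K, ⟪v, w⟫ ≤ 0}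

/-- Directional neighborhood V_{ρ,δ}(d). -/
def dirNbhd (ρ δ : ℝ) (d : E) : Set E :=
  {w | ‖w‖ < ρ ∧ ‖‖d‖ • w - ‖w‖ • d‖ ≤ δ * (‖w‖ * ‖d‖)}

/-- Metric subregularity of x ↦ g(x) - Λ at (x,0) in direction d. -/
def dirMetrSubreg (g : E → F) (Λ : Set F) (x d : E) : Prop :=
  ∃ κ > (0:ℝ), ∃ ρ > (0:ℝ), ∃ δ > (0:ℝ), ∀ y : E, y - x ∈ dirNbhd ρ δ d →
    Metric.infDist y {z | g z ∈ Λ} ≤ κ * Metric.infDist (g y) Λ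

/-- Metric subregularity in direction d with modulus κ. -/
def dirMetrSubregMod (g : E → F) (Λ : Set F) (x d : E) (κ : ℝ) : Prop :=
  ∀ κ' > κ, ∃ ρ > (0:ℝ), ∃ δ > (0:ℝ), ∀ y : E, y - x ∈ dirNbhd ρ δ d →
    Metric.infDist y {z | g z ∈ Λ} ≤ κ' * Metric.infDist (g y) Λ

/-- Support function, with values in EReal. -/
noncomputable def suppFn (S : Set E) (l : E) : EReal :=
  sSup ((fun u => ((⟪l, u⟫ : ℝ) : EReal)) '' S)

/-- Lower generalized support function. -/
noncomputable def sigmaHat (S : Set E) (l : E) : EReal :=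
  liminf (fun l' => sInf ((fun u => ((⟪l', u⟫ : ℝ) : EReal)) '' {u | l' ∈ limNormal S u})) (𝓝 l)

end Defs

/-- Painlevé–Kuratowski outer limit of a set-valued mapping. -/
def outerLimit {F E : Type*} [NormedAddCommGroup E] [NormedAddCommGroup F]
    (C : F → Set E) (u : F) : Set E :=
  {v | ∃ uk : ℕ → F, ∃ vk : ℕ → E, Tendsto uk atTop (𝓝 u) ∧ Tendsto vk atTop (𝓝 v) ∧
    ∀ k, vk k ∈ C (uk k)}

/-! Every point of the outer limit is a limit of points `v_k ∈ C(u_k)` with `u_k → u`, whose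
distances to `x` dominate the lower limit. Conversely, if `dist(x, C(u')) < r` for `u'`
arbitrarily close to `u`, the witnesses `v' ∈ C(u')` lie in a bounded set, so by properness a
subsequence converges, to a point of the outer limit at distance at most `r` from `x`. -/

section OuterLimit

variable {E F : Type*} [NormedAddCommGroup E] [NormedAddCommGroup F]

theorem liminf_infEDist_le_edist_of_mem_outerLimit {C : F → Set E} {u : F} {v : E} (x : E)
    (hv : v ∈ outerLimit C u) :
    liminf (fun u' => Metric.infEDist x (C u')) (𝓝 u) ≤ edist x v := by
  obtain ⟨uk, vk, huk, hvk, hmem⟩ := hv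
  calc liminf (fun u' => Metric.infEDist x (C u')) (𝓝 u)
      ≤ liminf (fun k => Metric.infEDist x (C (uk k))) atTop := liminf_le_liminf_of_le huk
    _ ≤ liminf (fun k => edist x (vk k)) atTop :=
      liminf_le_liminf (.of_forall fun k => Metric.infEDist_le_edist_of_mem (hmem k))
    _ = edist x v := (tendsto_const_nhds.edist hvk).liminf_eq

theorem exists_mem_outerLimit_edist_le [ProperSpace E] {C : F → Set E} {u : F} {x : E}
    {r : ENNReal} (hr : r ≠ ⊤) (h : ∃ᶠ u' in 𝓝 u, Metric.infEDist x (C u') < r) :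
    ∃ v ∈ outerLimit C u, edist x v ≤ r := by
  obtain ⟨uk, huk, hlt⟩ := frequently_iff_seq_forall.mp h
  choose vk hmem hvk using fun k => Metric.infEDist_lt_iff.mp (hlt k)
  have hball : ∀ k, vk k ∈ Metric.closedBall x r.toReal := fun k => by
    rw [Metric.mem_closedBall, dist_comm, dist_edist]
    exact ENNReal.toReal_mono hr (hvk k).le
  obtain ⟨v, -, φ, hφ, hv⟩ := (isCompact_closedBall x r.toReal).tendsto_subseq hball
  refine ⟨v, ⟨uk ∘ φ, vk ∘ φ, huk.comp hφ.tendsto_atTop, hv, fun k => hmem (φ k)⟩, ?_⟩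
  exact le_of_tendsto' (tendsto_const_nhds.edist hv) fun k => (hvk (φ k)).le

theorem infEDist_outerLimit_le_liminf [ProperSpace E] (C : F → Set E) (u : F) (x : E) :
    Metric.infEDist x (outerLimit C u) ≤ liminf (fun u' => Metric.infEDist x (C u')) (𝓝 u) := by
  refine le_of_forall_gt_imp_ge_of_dense fun r hr => ?_
  rcases eq_or_ne r ⊤ with rfl | hr_top
  · exact le_top
  obtain ⟨v, hv, hvr⟩ := exists_mem_outerLimit_edist_le hr_top
    (frequently_lt_of_liminf_lt (by isBoundedDefault) hr)
  exact (Metric.infEDist_le_edist_of_mem hv).trans hvr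

end OuterLimit

theorem stmt_0 {n m : ℕ} (x : EuclideanSpace ℝ (Fin n))
    (C : EuclideanSpace ℝ (Fin m) → Set (EuclideanSpace ℝ (Fin n)))
    (u : EuclideanSpace ℝ (Fin m)) :
    liminf (fun u' => EMetric.infEdist x (C u')) (𝓝 u)
      = EMetric.infEdist x (outerLimit C u) :=
  le_antisymm
    (Metric.le_infEDist.mpr fun _ hv => liminf_infEDist_le_edist_of_mem_outerLimit x hv)
    (infEDist_outerLimit_le_liminf C u x)
end

section
/- For a closed set S ⊆ R^n, every x ∈ S, and every d ∈ T_S(x): (i) T_{T_S(x)}(d) + T̂_S(x;d) = T_{T_S(x)}(d), and (ii) T_S²(x;d) + T̂_S(x;d) = T_S²(x;d), where T̂_S(x;d) is the directional regular tangent cone. -/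
open Filter Topology Pointwise RealInnerProductSpace

/-!
For `v ∈ T̂_S(x;d)` and `ε > 0` there are `δ, ρ > 0` such that from every `y ∈ S` with
`‖y - (x + t d)‖ < ρ t`, `t < δ`, the segment `y + L v`, `0 ≤ L ≤ ρ t`, stays within `ε L` of `S`.
This follows by continuous induction on `L`: at a nearest point `z ∈ S` of `y + L v`, the cone
`T_S(z)` contains a vector `ε`-close to `v`, which lets `L` grow a little further.

For (ii), apply this at `y = x + t d + (t²/2) w` with `L = t²/2`. For (i), apply it at the points
`x + τ u ∈ S` that realise `d + s a ∈ T_S(x)`, with `L = s τ`, and pass to the limit `τ → 0`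
using compactness of bounded sets. The reverse inclusions hold because `0 ∈ T̂_S(x;d)`.
-/

open Metric Set

section NormedSpace
variable {E : Type*} [NormedAddCommGroup E] [NormedSpace ℝ E]

lemma exists_add_smul_mem_norm_sub_lt {S : Set E} (hS : S.Nonempty) (p u : E) {σ η : ℝ}
    (hσ : 0 < σ) (hη : 0 < η) :
    ∃ u', p + σ • u' ∈ S ∧ ‖u' - u‖ < infDist (p + σ • u) S / σ + η := by
  obtain ⟨z, hzS, hz⟩ := (infDist_lt_iff hS).1
    (lt_add_of_pos_right (infDist (p + σ • u) S) (mul_pos hσ hη))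
  refine ⟨σ⁻¹ • (z - p), by rwa [smul_inv_smul₀ hσ.ne', add_sub_cancel], ?_⟩
  have hdiff : σ⁻¹ • (z - p) - u = σ⁻¹ • (z - (p + σ • u)) := by
    rw [smul_sub, smul_sub, smul_add, inv_smul_smul₀ hσ.ne']; abel
  rw [hdiff, norm_smul_of_nonneg (inv_nonneg.2 hσ.le), ← dist_eq_norm, dist_comm,
    inv_mul_lt_iff₀ hσ, mul_add, mul_div_cancel₀ _ hσ.ne']
  exact hz

lemma exists_tendsto_add_smul_mem {S : Set E} (hS : S.Nonempty) {p u : ℕ → E} {σ : ℕ → ℝ}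
    {w : E} (hσ : ∀ k, 0 < σ k) (hu : Tendsto u atTop (𝓝 w))
    (h : ∀ ε > 0, ∀ᶠ k in atTop, infDist (p k + σ k • u k) S ≤ ε * σ k) :
    ∃ u' : ℕ → E, Tendsto u' atTop (𝓝 w) ∧ ∀ k, p k + σ k • u' k ∈ S := by
  choose u' hu'S hu' using fun k =>
    exists_add_smul_mem_norm_sub_lt hS (p k) (u k) (hσ k) (Nat.one_div_pos_of_nat (n := k))
  refine ⟨u', ?_, hu'S⟩
  have hsmall : Tendsto (fun k => u' k - u k) atTop (𝓝 0) := by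
    rw [NormedAddGroup.tendsto_nhds_zero]
    intro ε hε
    have hk : ∀ᶠ k : ℕ in atTop, 1 / ((k : ℝ) + 1) < ε / 2 :=
      tendsto_one_div_add_atTop_nhds_zero_nat.eventually (eventually_lt_nhds (half_pos hε))
    filter_upwards [h (ε / 2) (half_pos hε), hk] with k hdist hk
    have : infDist (p k + σ k • u k) S / σ k ≤ ε / 2 := (div_le_iff₀ (hσ k)).2 hdist
    linarith [hu' k]
  simpa using hsmall.add hu

end NormedSpace

section InnerProductSpace
variable {E : Type*} [NormedAddCommGroup E] [InnerProductSpace ℝ E]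

lemma zero_mem_tangentCone' {S : Set E} {x : E} (hx : x ∈ S) : (0 : E) ∈ tangentCone' S x :=
  ⟨fun k => 1 / (k + 1), fun _ => 0, fun _ => Nat.one_div_pos_of_nat,
    tendsto_one_div_add_atTop_nhds_zero_nat, tendsto_const_nhds, fun _ => by simpa using hx⟩

lemma zero_mem_dirRegTangent {S : Set E} {x d : E} : (0 : E) ∈ dirRegTangent S x d :=
  fun _ _ _ _ _ hmem => ⟨fun _ => 0, tendsto_const_nhds, fun k => zero_mem_tangentCone' (hmem k)⟩

lemma exists_infDist_add_smul_le_of_mem_tangentCone' {S : Set E} {z v w : E} {ε η : ℝ}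
    (hw : w ∈ tangentCone' S z) (hwv : ‖w - v‖ < ε) (hη : 0 < η) :
    ∃ τ, 0 < τ ∧ τ < η ∧ infDist (z + τ • v) S ≤ ε * τ := by
  obtain ⟨t, u, ht, ht0, hu, hmem⟩ := hw
  have hball : ∀ᶠ j in atTop, u j ∈ ball v ε :=
    hu.eventually (isOpen_ball.mem_nhds (by rwa [mem_ball, dist_eq_norm]))
  obtain ⟨j, htj, huj⟩ := ((ht0.eventually (eventually_lt_nhds hη)).and hball).exists
  refine ⟨t j, ht j, htj, (infDist_le_dist_of_mem (hmem j)).trans ?_⟩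
  rw [dist_add_left, dist_smul₀, Real.norm_of_nonneg (ht j).le, mul_comm, dist_comm]
  exact mul_le_mul_of_nonneg_right (mem_ball.1 huj).le (ht j).le

lemma dirRegTangent_uniform {S : Set E} {x d v : E} (hv : v ∈ dirRegTangent S x d) {ε : ℝ}
    (hε : 0 < ε) :
    ∃ δ > 0, ∃ ρ > 0, ∀ t, 0 < t → t < δ → ∀ z ∈ S, ‖z - (x + t • d)‖ < ρ * t →
      ∃ w ∈ tangentCone' S z, ‖w - v‖ < ε := by
  by_contra! h
  choose t ht htδ z hzS hz hfar using fun m : ℕ =>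
    h (1 / (m + 1)) Nat.one_div_pos_of_nat (1 / (m + 1)) Nat.one_div_pos_of_nat
  have hdiam : Tendsto (fun m : ℕ => 1 / ((m : ℝ) + 1)) atTop (𝓝 0) :=
    tendsto_one_div_add_atTop_nhds_zero_nat
  have ht0 : Tendsto t atTop (𝓝 0) :=
    squeeze_zero (fun m => (ht m).le) (fun m => (htδ m).le) hdiam
  set dk : ℕ → E := fun m => (t m)⁻¹ • (z m - x)
  have hxdk : ∀ m, x + t m • dk m = z m := fun m => by
    simp only [dk, smul_inv_smul₀ (ht m).ne', add_sub_cancel]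
  have hdk : Tendsto dk atTop (𝓝 d) := by
    rw [tendsto_iff_norm_sub_tendsto_zero]
    refine squeeze_zero (fun _ => norm_nonneg _) (fun m => ?_) hdiam
    have : dk m - d = (t m)⁻¹ • (z m - (x + t m • d)) := by
      simp only [dk, smul_sub, smul_add, inv_smul_smul₀ (ht m).ne']; abel
    rw [this, norm_smul_of_nonneg (inv_nonneg.2 (ht m).le), inv_mul_le_iff₀ (ht m), mul_comm]
    exact (hz m).le
  obtain ⟨vk, hvk, hvkT⟩ := hv t dk ht ht0 hdk fun m => (hxdk m).symm ▸ hzS m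
  have hnear : ∀ᶠ m in atTop, ‖vk m - v‖ < ε := by
    simpa only [dist_eq_norm] using hvk.eventually (ball_mem_nhds v hε)
  obtain ⟨m, hm⟩ := hnear.exists
  exact (hm.trans_le (hfar m (vk m) (hxdk m ▸ hvkT m))).false

end InnerProductSpace

section ProperSpace
variable {E : Type*} [NormedAddCommGroup E] [InnerProductSpace ℝ E] [ProperSpace E]

lemma infDist_tangentCone'_le {S : Set E} (hS : S.Nonempty) {x q : E} {r : ℝ} {τ : ℕ → ℝ}
    {u : ℕ → E} (hτ : ∀ j, 0 < τ j) (hτ0 : Tendsto τ atTop (𝓝 0)) (hu : Tendsto u atTop (𝓝 q))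
    (h : ∀ᶠ j in atTop, infDist (x + τ j • u j) S ≤ r * τ j) :
    infDist q (tangentCone' S x) ≤ r := by
  choose c hcS hc using fun j => exists_add_smul_mem_norm_sub_lt hS x (u j) (hτ j) (hτ j)
  have hcu : ∀ᶠ j in atTop, ‖c j - u j‖ ≤ r + τ j := by
    filter_upwards [h] with j hj
    linarith [hc j, (div_le_iff₀ (hτ j)).2 hj]
  have hbdd : ∀ᶠ j in atTop, c j ∈ closedBall q (r + 2) := by
    filter_upwards [hcu, hτ0.eventually (eventually_lt_nhds one_pos),
      (tendsto_iff_norm_sub_tendsto_zero.1 hu).eventually (eventually_lt_nhds one_pos)]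
      with j hcj hτj huj
    rw [mem_closedBall, dist_eq_norm]
    linarith [norm_sub_le_norm_sub_add_norm_sub (c j) (u j) q]
  obtain ⟨a, -, φ, hφ, hca⟩ := tendsto_subseq_of_frequently_bounded isBounded_closedBall
    hbdd.frequently
  have haT : a ∈ tangentCone' S x :=
    ⟨τ ∘ φ, c ∘ φ, fun _ => hτ _, hτ0.comp hφ.tendsto_atTop, hca, fun _ => hcS _⟩
  have haq : ‖a - q‖ ≤ r := by
    refine le_of_tendsto_of_tendsto ((hca.sub (hu.comp hφ.tendsto_atTop)).norm)
      (by simpa using (hτ0.comp hφ.tendsto_atTop).const_add r)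
      (hφ.tendsto_atTop.eventually hcu)
  calc infDist q (tangentCone' S x) ≤ dist q a := infDist_le_dist_of_mem haT
    _ = ‖a - q‖ := by rw [dist_comm, dist_eq_norm]
    _ ≤ r := haq

lemma dirRegTangent_flow {S : Set E} (hS : IsClosed S) {x d v : E}
    (hv : v ∈ dirRegTangent S x d) {ε : ℝ} (hε : 0 < ε) :
    ∃ δ > 0, ∃ ρ > 0, ∀ t, 0 < t → t < δ → ∀ y ∈ S, ‖y - (x + t • d)‖ < ρ * t →
      ∀ L, 0 ≤ L → L ≤ ρ * t → infDist (y + L • v) S ≤ ε * L := by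
  obtain ⟨δ, hδ, ρ₀, hρ₀, H⟩ := dirRegTangent_uniform hv hε
  have hK : 0 < ε + ‖v‖ + 1 := by positivity
  refine ⟨δ, hδ, ρ₀ / (ε + ‖v‖ + 1), div_pos hρ₀ hK, fun t ht htδ y hyS hy L hL hLρ => ?_⟩
  have hclosed : IsClosed ({s : ℝ | infDist (y + s • v) S ≤ ε * s} ∩ Icc 0 L) :=
    (isClosed_le ((continuous_infDist_pt S).comp (by fun_prop)) (by fun_prop)).inter isClosed_Icc
  refine hclosed.mem_of_ge_of_forall_exists_gt (by simp [infDist_zero_of_mem hyS]) hL ?_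
  rintro s ⟨hs : infDist (y + s • v) S ≤ ε * s, hs0, hsL⟩
  obtain ⟨z, hzS, hz⟩ := hS.exists_infDist_eq_dist ⟨y, hyS⟩ (y + s • v)
  have hzs : ‖z - (y + s • v)‖ ≤ ε * s := by rwa [← dist_eq_norm, dist_comm, ← hz]
  have hzx : ‖z - (x + t • d)‖ < ρ₀ * t := by
    have hsv : ‖s • v‖ = s * ‖v‖ := norm_smul_of_nonneg hs0 v
    calc ‖z - (x + t • d)‖ = ‖(z - (y + s • v)) + s • v + (y - (x + t • d))‖ := by
          congr 1; abel
      _ < ε * s + s * ‖v‖ + ρ₀ / (ε + ‖v‖ + 1) * t := by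
          have := norm_add₃_le (a := z - (y + s • v)) (b := s • v) (c := y - (x + t • d))
          linarith
      _ ≤ ρ₀ / (ε + ‖v‖ + 1) * t * (ε + ‖v‖ + 1) := by nlinarith [norm_nonneg v]
      _ = ρ₀ * t := by field_simp
  obtain ⟨w, hwT, hwv⟩ := H t ht htδ z hzS hzx
  obtain ⟨τ, hτ, hτL, hτS⟩ :=
    exists_infDist_add_smul_le_of_mem_tangentCone' hwT hwv (sub_pos.2 hsL)
  refine ⟨s + τ, ?_, by linarith, by linarith⟩
  calc infDist (y + (s + τ) • v) S ≤ infDist (z + τ • v) S + dist (y + (s + τ) • v) (z + τ • v) :=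
        infDist_le_infDist_add_dist
    _ = infDist (z + τ • v) S + infDist (y + s • v) S := by
        rw [hz, add_smul, ← add_assoc, dist_add_right]
    _ ≤ ε * (s + τ) := by linarith

lemma add_mem_tangentCone2 {S : Set E} (hS : IsClosed S) {x d w v : E} (hx : x ∈ S)
    (hw : w ∈ tangentCone2 S x d) (hv : v ∈ dirRegTangent S x d) :
    w + v ∈ tangentCone2 S x d := by
  obtain ⟨t, ws, ht, ht0, hws, hmem⟩ := hw
  suffices h : ∀ ε > 0, ∀ᶠ k in atTop,
      infDist (x + t k • d + (t k ^ 2 / 2) • (ws k + v)) S ≤ ε * (t k ^ 2 / 2) by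
    obtain ⟨u, hu, huS⟩ :=
      exists_tendsto_add_smul_mem ⟨x, hx⟩ (fun k => by have := ht k; positivity)
        (hws.add_const v) h
    exact ⟨t, u, ht, ht0, hu, huS⟩
  intro ε hε
  obtain ⟨δ, hδ, ρ, hρ, H⟩ := dirRegTangent_flow hS hv hε
  have hsmall : Tendsto (fun k => t k * ‖ws k‖ / 2) atTop (𝓝 0) := by
    simpa using (ht0.mul hws.norm).div_const 2
  filter_upwards [ht0.eventually (eventually_lt_nhds hδ),
    ht0.eventually (eventually_lt_nhds (by positivity : (0 : ℝ) < 2 * ρ)),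
    hsmall.eventually (eventually_lt_nhds hρ)] with k hδk hρk hwk
  have hnear : ‖x + t k • d + (t k ^ 2 / 2) • ws k - (x + t k • d)‖ < ρ * t k := by
    rw [add_sub_cancel_left, norm_smul_of_nonneg (by positivity)]
    nlinarith [ht k]
  have := H (t k) (ht k) hδk _ (hmem k) hnear (t k ^ 2 / 2) (by positivity) (by nlinarith [ht k])
  rwa [add_assoc _ ((t k ^ 2 / 2) • ws k), ← smul_add] at this

lemma add_mem_tangentCone'_tangentCone' {S : Set E} (hS : IsClosed S) {x d a v : E}
    (hx : x ∈ S) (hd : d ∈ tangentCone' S x) (ha : a ∈ tangentCone' (tangentCone' S x) d)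
    (hv : v ∈ dirRegTangent S x d) :
    a + v ∈ tangentCone' (tangentCone' S x) d := by
  obtain ⟨s, as, hs, hs0, has, hmem⟩ := ha
  suffices h : ∀ ε > 0, ∀ᶠ m in atTop,
      infDist (d + s m • (as m + v)) (tangentCone' S x) ≤ ε * s m by
    obtain ⟨u, hu, huK⟩ := exists_tendsto_add_smul_mem ⟨d, hd⟩ hs (has.add_const v) h
    exact ⟨s, u, hs, hs0, hu, huK⟩
  intro ε hε
  obtain ⟨δ, hδ, ρ, hρ, H⟩ := dirRegTangent_flow hS hv hε
  have hsmall : Tendsto (fun m => s m * ‖as m‖) atTop (𝓝 0) := by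
    simpa using hs0.mul has.norm
  filter_upwards [hs0.eventually (eventually_le_nhds hρ), hsmall.eventually (eventually_lt_nhds hρ)]
    with m hρm ham
  obtain ⟨τ, u, hτ, hτ0, hu, huS⟩ := hmem m
  have hball : d + s m • as m ∈ ball d ρ := by
    rwa [mem_ball, dist_eq_norm, add_sub_cancel_left, norm_smul_of_nonneg (hs m).le]
  have hu' : Tendsto (fun j => u j + s m • v) atTop (𝓝 (d + s m • (as m + v))) := by
    rw [smul_add, ← add_assoc]; exact hu.add_const _
  refine infDist_tangentCone'_le ⟨x, hx⟩ hτ hτ0 hu' ?_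
  filter_upwards [hτ0.eventually (eventually_lt_nhds hδ),
    hu.eventually (isOpen_ball.mem_nhds hball)] with j hδj huj
  have hnear : ‖x + τ j • u j - (x + τ j • d)‖ < ρ * τ j := by
    rw [add_sub_add_left_eq_sub, ← smul_sub, norm_smul_of_nonneg (hτ j).le, mul_comm]
    exact mul_lt_mul_of_pos_right (by rwa [← dist_eq_norm]) (hτ j)
  have := H (τ j) (hτ j) hδj _ (huS j) hnear (s m * τ j) (mul_pos (hs m) (hτ j)).le
    (mul_le_mul_of_nonneg_right hρm (hτ j).le)
  rwa [smul_add, smul_smul, mul_comm (τ j), ← add_assoc, mul_assoc]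

end ProperSpace

theorem stmt_2 {n : ℕ} (S : Set (EuclideanSpace ℝ (Fin n))) (hS : IsClosed S)
    (x : EuclideanSpace ℝ (Fin n)) (hx : x ∈ S)
    (d : EuclideanSpace ℝ (Fin n)) (hd : d ∈ tangentCone' S x) :
    tangentCone' (tangentCone' S x) d + dirRegTangent S x d = tangentCone' (tangentCone' S x) d ∧
    tangentCone2 S x d + dirRegTangent S x d = tangentCone2 S x d :=
  ⟨(add_subset_iff.2 fun _ ha _ hv => add_mem_tangentCone'_tangentCone' hS hx hd ha hv).antisymm
      (subset_add_left _ zero_mem_dirRegTangent),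
    (add_subset_iff.2 fun _ hw _ hv => add_mem_tangentCone2 hS hx hw hv).antisymm
      (subset_add_left _ zero_mem_dirRegTangent)⟩
end

section
/- Let g: R^n → R^m be twice continuously differentiable, Λ ⊆ R^m closed, x̄ with g(x̄) ∈ Λ, and F := {x : g(x) ∈ Λ}. If M(x) := g(x) − Λ is metrically subregular at (x̄, 0) in direction d, then d ∈ T_F(x̄) if and only if ∇g(x̄)d ∈ T_Λ(g(x̄)). -/
open Filter Topology Pointwise RealInnerProductSpace

/-!
Differentiating a curve `x + t • v` in `F` gives the inclusion `∇g(x̄) T_F(x̄) ⊆ T_Λ(g(x̄))`.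
Conversely, if `g(x̄) + t_k u_k ∈ Λ` with `u_k → ∇g(x̄)d`, then by first-order expansion
`dist(g(x̄ + t_k d), Λ) = o(t_k)`. The points `x̄ + t_k d` lie in the directional neighbourhood of
`d`, so subregularity turns this into `dist(x̄ + t_k d, F) = o(t_k)`, and near-projections of
`x̄ + t_k d` onto `F` witness `d ∈ T_F(x̄)`.
-/

open Metric

section Differentiable

variable {E F : Type*} [NormedAddCommGroup E] [NormedSpace ℝ E] [NormedAddCommGroup F]
  [NormedSpace ℝ F]

theorem HasFDerivAt.tendsto_inv_smul_sub {g : E → F} {G : E →L[ℝ] F} {x d : E}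
    (hg : HasFDerivAt g G x) {t : ℕ → ℝ} {v : ℕ → E} (ht : ∀ k, 0 < t k)
    (ht0 : Tendsto t atTop (𝓝 0)) (hv : Tendsto v atTop (𝓝 d)) :
    Tendsto (fun k => (t k)⁻¹ • (g (x + t k • v k) - g x)) atTop (𝓝 (G d)) := by
  refine (hg.hasFDerivWithinAt (s := Set.univ)).lim ?_ (.of_forall fun _ => Set.mem_univ _) ?_
  · simpa using ht0.smul hv
  · simpa [inv_smul_smul₀ (ht _).ne'] using hv

theorem tendsto_inv_mul_infDist_of_hasFDerivAt {g : E → F} {G : E →L[ℝ] F} {Λ : Set F}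
    {x d : E} (hg : HasFDerivAt g G x) {t : ℕ → ℝ} {u : ℕ → F} (ht : ∀ k, 0 < t k)
    (ht0 : Tendsto t atTop (𝓝 0)) (hu : Tendsto u atTop (𝓝 (G d)))
    (hmem : ∀ k, g x + t k • u k ∈ Λ) :
    Tendsto (fun k => (t k)⁻¹ * infDist (g (x + t k • d)) Λ) atTop (𝓝 0) := by
  have hquot : Tendsto (fun k => ‖(t k)⁻¹ • (g (x + t k • d) - g x) - u k‖) atTop (𝓝 0) := by
    simpa using ((hg.tendsto_inv_smul_sub ht ht0 (tendsto_const_nhds (x := d))).sub hu).norm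
  refine squeeze_zero (fun k => mul_nonneg (inv_nonneg.2 (ht k).le) infDist_nonneg)
    (fun k => ?_) hquot
  have hdist : infDist (g (x + t k • d)) Λ ≤ t k * ‖(t k)⁻¹ • (g (x + t k • d) - g x) - u k‖ := by
    refine (infDist_le_dist_of_mem (hmem k)).trans_eq ?_
    rw [← norm_smul_of_nonneg (ht k).le, smul_sub, smul_inv_smul₀ (ht k).ne', dist_eq_norm,
      sub_sub]
  rw [inv_mul_le_iff₀ (ht k)]
  exact hdist

end Differentiable

section TangentCone

variable {E F : Type*} [NormedAddCommGroup E] [InnerProductSpace ℝ E]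
  [NormedAddCommGroup F]

theorem mem_tangentCone'_of_tendsto_inv_mul_infDist {S : Set E} {x d : E} (hS : S.Nonempty)
    {t : ℕ → ℝ} (ht : ∀ k, 0 < t k) (ht0 : Tendsto t atTop (𝓝 0))
    (hdist : Tendsto (fun k => (t k)⁻¹ * infDist (x + t k • d) S) atTop (𝓝 0)) :
    d ∈ tangentCone' S x := by
  have hnear : ∀ k : ℕ, ∃ y ∈ S,
      dist (x + t k • d) y < infDist (x + t k • d) S + t k * (k + 1 : ℝ)⁻¹ := fun k =>
    (infDist_lt_iff hS).1 (lt_add_of_pos_right _ (mul_pos (ht k) (by positivity)))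
  choose y hyS hy using hnear
  refine ⟨t, fun k => (t k)⁻¹ • (y k - x), ht, ht0, ?_, fun k => ?_⟩
  · rw [tendsto_iff_norm_sub_tendsto_zero]
    have hbound : Tendsto (fun k : ℕ => (t k)⁻¹ * infDist (x + t k • d) S + (k + 1 : ℝ)⁻¹)
        atTop (𝓝 0) := by
      simpa using hdist.add tendsto_one_div_add_atTop_nhds_zero_nat
    refine squeeze_zero (fun _ => norm_nonneg _) (fun k => ?_) hbound
    have hnorm : ‖(t k)⁻¹ • (y k - x) - d‖ = (t k)⁻¹ * dist (x + t k • d) (y k) := by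
      rw [dist_comm, dist_eq_norm, ← norm_smul_of_nonneg (inv_nonneg.2 (ht k).le)]
      congr 1
      rw [smul_sub _ (y k), smul_sub, smul_add, inv_smul_smul₀ (ht k).ne']
      abel
    calc ‖(t k)⁻¹ • (y k - x) - d‖
        ≤ (t k)⁻¹ * (infDist (x + t k • d) S + t k * (k + 1 : ℝ)⁻¹) := by
          rw [hnorm]
          exact mul_le_mul_of_nonneg_left (hy k).le (inv_nonneg.2 (ht k).le)
      _ = (t k)⁻¹ * infDist (x + t k • d) S + (k + 1 : ℝ)⁻¹ := by
          rw [mul_add, inv_mul_cancel_left₀ (ht k).ne']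
  · rw [smul_inv_smul₀ (ht k).ne', add_sub_cancel]
    exact hyS k

theorem smul_mem_dirNbhd {ρ δ s : ℝ} {d : E} (hs : 0 ≤ s) (hsρ : s * ‖d‖ < ρ) (hδ : 0 ≤ δ) :
    s • d ∈ dirNbhd ρ δ d := by
  have hcone : ‖d‖ • (s • d) - ‖s • d‖ • d = 0 := by
    rw [norm_smul, Real.norm_of_nonneg hs, smul_smul, sub_eq_zero, mul_comm]
  refine ⟨by rwa [norm_smul, Real.norm_of_nonneg hs], ?_⟩
  rw [hcone, norm_zero]
  positivity

theorem dirMetrSubreg.exists_eventually_infDist_le {g : E → F} {Λ : Set F} {x d : E}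
    (hM : dirMetrSubreg g Λ x d) {t : ℕ → ℝ} (ht : ∀ k, 0 < t k)
    (ht0 : Tendsto t atTop (𝓝 0)) :
    ∃ κ : ℝ, ∀ᶠ k in atTop,
      infDist (x + t k • d) {z | g z ∈ Λ} ≤ κ * infDist (g (x + t k • d)) Λ := by
  obtain ⟨κ, -, ρ, hρ, δ, hδ, hsub⟩ := hM
  have hsmall : ∀ᶠ k in atTop, t k * ‖d‖ < ρ := by
    refine (ht0.mul_const ‖d‖).eventually_lt_const ?_
    rwa [zero_mul]
  refine ⟨κ, hsmall.mono fun k hk => hsub _ ?_⟩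
  rw [add_sub_cancel_left]
  exact smul_mem_dirNbhd (ht k).le hk hδ.le

theorem HasFDerivAt.mapsTo_tangentCone' [InnerProductSpace ℝ F] {g : E → F} {G : E →L[ℝ] F}
    {Λ : Set F} {x : E} (hg : HasFDerivAt g G x) :
    Set.MapsTo G (tangentCone' (g ⁻¹' Λ) x) (tangentCone' Λ (g x)) := by
  rintro d ⟨t, v, ht, ht0, hv, hmem⟩
  refine ⟨t, fun k => (t k)⁻¹ • (g (x + t k • v k) - g x), ht, ht0,
    hg.tendsto_inv_smul_sub ht ht0 hv, fun k => ?_⟩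
  rw [smul_inv_smul₀ (ht k).ne', add_sub_cancel]
  exact hmem k

theorem mem_tangentCone'_preimage_of_dirMetrSubreg [InnerProductSpace ℝ F] {g : E → F}
    {G : E →L[ℝ] F} {Λ : Set F} {x d : E} (hg : HasFDerivAt g G x) (hx : g x ∈ Λ)
    (hM : dirMetrSubreg g Λ x d)
    (hd : G d ∈ tangentCone' Λ (g x)) : d ∈ tangentCone' {z | g z ∈ Λ} x := by
  obtain ⟨t, u, ht, ht0, hu, hmem⟩ := hd
  obtain ⟨κ, hκ⟩ := hM.exists_eventually_infDist_le ht ht0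
  refine mem_tangentCone'_of_tendsto_inv_mul_infDist ⟨x, hx⟩ ht ht0 ?_
  have himage := (tendsto_inv_mul_infDist_of_hasFDerivAt hg ht ht0 hu hmem).const_mul κ
  rw [mul_zero] at himage
  refine squeeze_zero' (.of_forall fun k => mul_nonneg (inv_nonneg.2 (ht k).le) infDist_nonneg)
    (hκ.mono fun k hk => ?_) himage
  rw [mul_left_comm]
  exact mul_le_mul_of_nonneg_left hk (inv_nonneg.2 (ht k).le)

end TangentCone

theorem stmt_6_general {n m : ℕ} (g : EuclideanSpace ℝ (Fin n) → EuclideanSpace ℝ (Fin m))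
    (hg : ContDiff ℝ 2 g) (Λ : Set (EuclideanSpace ℝ (Fin m)))
    (xb : EuclideanSpace ℝ (Fin n)) (hx : g xb ∈ Λ)
    (d : EuclideanSpace ℝ (Fin n)) (hM : dirMetrSubreg g Λ xb d) :
    d ∈ tangentCone' {x | g x ∈ Λ} xb ↔ fderiv ℝ g xb d ∈ tangentCone' Λ (g xb) := by
  have hG : HasFDerivAt g (fderiv ℝ g xb) xb :=
    (hg.differentiable (by norm_num)).differentiableAt.hasFDerivAt
  exact ⟨fun hd => hG.mapsTo_tangentCone' hd,
    mem_tangentCone'_preimage_of_dirMetrSubreg hG hx hM⟩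

theorem stmt_6 {n m : ℕ} (g : EuclideanSpace ℝ (Fin n) → EuclideanSpace ℝ (Fin m))
    (hg : ContDiff ℝ 2 g) (Λ : Set (EuclideanSpace ℝ (Fin m))) (hΛ : IsClosed Λ)
    (xb : EuclideanSpace ℝ (Fin n)) (hx : g xb ∈ Λ)
    (d : EuclideanSpace ℝ (Fin n)) (hM : dirMetrSubreg g Λ xb d) :
    d ∈ tangentCone' {x | g x ∈ Λ} xb ↔ fderiv ℝ g xb d ∈ tangentCone' Λ (g xb) :=
  stmt_6_general g hg Λ xb hx d hM
end

section
/- Let g: R^n → R^m be twice continuously differentiable, Λ ⊆ R^m closed, g(x̄) ∈ Λ, F := {x : g(x) ∈ Λ}, and suppose M(x) := g(x) − Λ is metrically subregular at (x̄, 0) in direction d with ∇g(x̄)d ∈ T_Λ(g(x̄)). Then T_F²(x̄; d) = {w : ∇g(x̄)w + ∇²g(x̄)(d,d) ∈ T_Λ²(g(x̄); ∇g(x̄)d)}. -/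
open Filter Topology Pointwise RealInnerProductSpace

/-!
The inclusion `⊆` is a second-order Taylor expansion of `g` along the curves
`x̄ + t d + (t²/2) w_k`. For `⊇`, Taylor expansion shows that `g(x̄ + t d + (t²/2) w)` lies
within `o(t²)` of the points of `Λ` that realize `∇g(x̄) w + ∇²g(x̄)(d,d)` as a second-order
tangent; these points approach `x̄` in direction `d`, so directional metric subregularity
puts `x̄ + t d + (t²/2) w` within `o(t²)` of `F`, and points of `F` that nearly realize this
distance give the required sequence.
-/

open Set Metric Asymptotics

section SecondOrderQuotient

variable {E : Type*} [NormedAddCommGroup E] [NormedSpace ℝ E]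

/-- The vector `v` for which `y = x + t • d + (t ^ 2 / 2) • v`. -/
noncomputable def secondOrderQuotient (x d : E) (t : ℝ) (y : E) : E :=
  (2 / t ^ 2) • (y - x - t • d)

theorem add_smul_add_secondOrderQuotient {t : ℝ} (ht : t ≠ 0) (x d y : E) :
    x + t • d + (t ^ 2 / 2) • secondOrderQuotient x d t y = y := by
  rw [secondOrderQuotient, smul_smul, div_mul_div_cancel₀ two_ne_zero,
    div_self (pow_ne_zero 2 ht), one_smul]
  abel

theorem secondOrderQuotient_add_smul_add {t : ℝ} (ht : t ≠ 0) (x d v : E) :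
    secondOrderQuotient x d t (x + t • d + (t ^ 2 / 2) • v) = v := by
  have hsub : x + t • d + (t ^ 2 / 2) • v - x - t • d = (t ^ 2 / 2) • v := by abel
  rw [secondOrderQuotient, hsub, smul_smul, div_mul_div_cancel₀ (pow_ne_zero 2 ht),
    div_self two_ne_zero, one_smul]

theorem dist_secondOrderQuotient {t : ℝ} (ht : t ≠ 0) (x d y y' : E) :
    dist (secondOrderQuotient x d t y) (secondOrderQuotient x d t y') =
      2 / t ^ 2 * dist y y' := by
  rw [dist_eq_norm, dist_eq_norm, secondOrderQuotient, secondOrderQuotient, ← smul_sub,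
    norm_smul, Real.norm_of_nonneg (by positivity)]
  congr 2
  abel

end SecondOrderQuotient

section Taylor

variable {E F : Type*} [NormedAddCommGroup E] [NormedSpace ℝ E]
  [NormedAddCommGroup F] [NormedSpace ℝ F]
  {f : E → F} {f' : E → E →L[ℝ] F} {f'' : E →L[ℝ] E →L[ℝ] F} {x : E}

theorem isLittleO_sub_sub_sub_half_smul_sq (hf : ∀ᶠ y in 𝓝 x, HasFDerivAt f (f' y) y)
    (hf' : HasFDerivAt f' f'' x) :
    (fun u => f (x + u) - f x - f' x u - (1 / 2 : ℝ) • f'' u u) =o[𝓝 0] fun u => ‖u‖ ^ 2 := by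
  refine isLittleO_iff.2 fun ε hε => ?_
  obtain ⟨δ, hδ, hball⟩ := eventually_nhds_iff_ball.1
    (hf.and ((hasFDerivAt_iff_isLittleO.1 hf').def hε))
  refine eventually_nhds_iff_ball.2 ⟨δ, hδ, fun u hu => ?_⟩
  rw [mem_ball_zero_iff] at hu
  have hseg : ∀ s ∈ Icc (0 : ℝ) 1, x + s • u ∈ ball x δ := fun s hs => by
    rw [mem_ball_iff_norm, add_sub_cancel_left, norm_smul, Real.norm_of_nonneg hs.1]
    exact lt_of_le_of_lt (mul_le_of_le_one_left (norm_nonneg u) hs.2) hu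
  let φ : ℝ → F := fun s => f (x + s • u) - s • f' x u - (s ^ 2 / 2) • f'' u u
  let φ' : ℝ → F := fun s => (f' (x + s • u) - f' x - f'' (s • u)) u
  have hφ : ∀ s ∈ Icc (0 : ℝ) 1, HasDerivWithinAt φ (φ' s) (Icc 0 1) s := fun s hs => by
    have hline : HasDerivAt (fun s : ℝ => x + s • u) u s := by
      simpa using ((hasDerivAt_id s).smul_const u).const_add x
    have hsq : HasDerivAt (fun s : ℝ => s ^ 2 / 2) s s := by
      simpa using (hasDerivAt_pow 2 s).div_const 2
    have := (((hball _ (hseg s hs)).1.comp_hasDerivAt s hline).sub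
      ((hasDerivAt_id s).smul_const (f' x u))).sub (hsq.smul_const (f'' u u))
    convert this.hasDerivWithinAt using 1
    · rfl
    · simp only [φ', sub_apply, map_smul, smul_apply, one_smul]
  have hφ' : ∀ s ∈ Ico (0 : ℝ) 1, ‖φ' s‖ ≤ ε * ‖‖u‖ ^ 2‖ := fun s hs => by
    have hs' : s ∈ Icc (0 : ℝ) 1 := Ico_subset_Icc_self hs
    have hsu : ‖s • u‖ ≤ ‖u‖ := by
      rw [norm_smul, Real.norm_of_nonneg hs.1]
      exact mul_le_of_le_one_left (norm_nonneg u) hs.2.le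
    have hclose := (hball _ (hseg s hs')).2
    rw [add_sub_cancel_left] at hclose
    calc ‖φ' s‖ ≤ ‖f' (x + s • u) - f' x - f'' (s • u)‖ * ‖u‖ :=
          ContinuousLinearMap.le_opNorm _ u
      _ ≤ ε * ‖s • u‖ * ‖u‖ := by gcongr
      _ ≤ ε * ‖u‖ * ‖u‖ := by gcongr
      _ = ε * ‖‖u‖ ^ 2‖ := by rw [norm_pow, norm_norm]; ring
  have hmvt := norm_image_sub_le_of_norm_deriv_le_segment_01' hφ hφ'
  convert hmvt using 2
  simp only [φ, zero_smul, one_smul, add_zero, sub_zero]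
  norm_num
  abel

theorem tendsto_secondOrderQuotient_apply {ι : Type*} {l : Filter ι} {d w : E} {t : ι → ℝ}
    {y : ι → E} (hf : ∀ᶠ y in 𝓝 x, HasFDerivAt f (f' y) y) (hf' : HasFDerivAt f' f'' x)
    (ht : ∀ k, t k ≠ 0) (ht0 : Tendsto t l (𝓝 0))
    (hy : Tendsto (fun k => secondOrderQuotient x d (t k) (y k)) l (𝓝 w)) :
    Tendsto (fun k => secondOrderQuotient (f x) (f' x d) (t k) (f (y k))) l
      (𝓝 (f' x w + f'' d d)) := by
  set v := fun k => secondOrderQuotient x d (t k) (y k)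
  set a := fun k => d + (t k / 2) • v k
  set R := fun u => f (x + u) - f x - f' x u - (1 / 2 : ℝ) • f'' u u
  have hya : ∀ k, y k = x + t k • a k := fun k => by
    rw [← add_smul_add_secondOrderQuotient (ht k) x d (y k)]
    simp only [a, v, smul_add, smul_smul, add_assoc]
    ring_nf
  have hsplit : ∀ k, secondOrderQuotient (f x) (f' x d) (t k) (f (y k))
      = f' x (v k) + f'' (a k) (a k) + (2 / t k ^ 2) • R (t k • a k) := fun k => by
    simp only [secondOrderQuotient, R, hya k, a, map_add, map_smul, add_apply, smul_apply]
    match_scalars <;> field_simp [ht k] <;> ring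
  have ha : Tendsto a l (𝓝 d) := by
    simpa using tendsto_const_nhds.add ((ht0.div_const 2).smul hy)
  have hR : Tendsto (fun k => (2 / t k ^ 2) • R (t k • a k)) l (𝓝 0) := by
    have hsmall : (fun k => R (t k • a k)) =o[l] fun k => ‖t k • a k‖ ^ 2 :=
      (isLittleO_sub_sub_sub_half_smul_sq hf hf').comp_tendsto (by simpa using ht0.smul ha)
    have hbdd : (fun k => (2 / t k ^ 2) * ‖t k • a k‖ ^ 2) =O[l] fun _ => (1 : ℝ) := by
      refine Tendsto.isBigO_one ℝ (c := 2 * ‖d‖ ^ 2) ?_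
      refine ((ha.norm.pow 2).const_mul 2).congr fun k => ?_
      rw [norm_smul, mul_pow, Real.norm_eq_abs, sq_abs]
      field_simp [ht k]
    exact (isLittleO_one_iff ℝ).1 (((isBigO_refl _ _).smul_isLittleO hsmall).trans_isBigO hbdd)
  have hlim := ((f' x).continuous.tendsto w |>.comp hy).add
    ((f''.continuous₂.tendsto (d, d)).comp (ha.prodMk_nhds ha)) |>.add hR
  rw [add_zero] at hlim
  exact hlim.congr fun k => (hsplit k).symm

end Taylor

section TangentCone2

variable {E : Type*} [NormedAddCommGroup E] [InnerProductSpace ℝ E]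

theorem mem_tangentCone2_iff {S : Set E} {x d w : E} :
    w ∈ tangentCone2 S x d ↔ ∃ t : ℕ → ℝ, ∃ y : ℕ → E, (∀ k, 0 < t k) ∧
      Tendsto t atTop (𝓝 0) ∧ (∀ k, y k ∈ S) ∧
      Tendsto (fun k => secondOrderQuotient x d (t k) (y k)) atTop (𝓝 w) := by
  constructor
  · rintro ⟨t, v, ht, ht0, hv, hS⟩
    refine ⟨t, fun k => x + t k • d + (t k ^ 2 / 2) • v k, ht, ht0, hS, ?_⟩
    simpa only [secondOrderQuotient_add_smul_add (ht _).ne'] using hv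
  · rintro ⟨t, y, ht, ht0, hS, hy⟩
    refine ⟨t, _, ht, ht0, hy, fun k => ?_⟩
    rw [add_smul_add_secondOrderQuotient (ht k).ne']
    exact hS k

theorem mem_tangentCone2_of_tendsto_infDist_div_sq {S : Set E} (hS : S.Nonempty) {x d w : E}
    {t : ℕ → ℝ} (ht : ∀ k, 0 < t k) (ht0 : Tendsto t atTop (𝓝 0))
    (h : Tendsto (fun k => infDist (x + t k • d + (t k ^ 2 / 2) • w) S / t k ^ 2) atTop
      (𝓝 0)) :
    w ∈ tangentCone2 S x d := by
  set y := fun k => x + t k • d + (t k ^ 2 / 2) • w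
  have hp : ∀ k, ∃ p ∈ S, dist (y k) p < infDist (y k) S + t k ^ 3 := fun k =>
    (infDist_lt_iff hS).1 (lt_add_of_pos_right _ (pow_pos (ht k) 3))
  choose p hpS hpy using hp
  refine mem_tangentCone2_iff.2 ⟨t, p, ht, ht0, hpS, tendsto_iff_dist_tendsto_zero.2 ?_⟩
  have hbound : ∀ k, dist (secondOrderQuotient x d (t k) (p k)) w
      ≤ 2 * (infDist (y k) S / t k ^ 2) + 2 * t k := fun k => by
    have htk := ht k
    rw [← secondOrderQuotient_add_smul_add htk.ne' x d w, dist_secondOrderQuotient htk.ne',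
      dist_comm]
    calc 2 / t k ^ 2 * dist (y k) (p k) ≤ 2 / t k ^ 2 * (infDist (y k) S + t k ^ 3) := by
          gcongr; exact (hpy k).le
      _ = 2 * (infDist (y k) S / t k ^ 2) + 2 * t k := by field_simp
  refine squeeze_zero (fun _ => dist_nonneg) hbound ?_
  simpa using (h.const_mul 2).add (ht0.const_mul 2)

end TangentCone2

section DirNbhd

variable {E : Type*} [NormedAddCommGroup E] [InnerProductSpace ℝ E]

theorem eventually_smul_mem_dirNbhd {ι : Type*} {l : Filter ι} {ρ δ : ℝ} {d : E}
    (hρ : 0 < ρ) (hδ : 0 < δ) {t : ι → ℝ} {a : ι → E} (ht : ∀ k, 0 < t k)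
    (ht0 : Tendsto t l (𝓝 0)) (ha : Tendsto a l (𝓝 d)) :
    ∀ᶠ k in l, t k • a k ∈ dirNbhd ρ δ d := by
  have hsmall : ∀ᶠ k in l, ‖t k • a k‖ < ρ := by
    have := (ht0.smul ha).norm
    rw [zero_smul, norm_zero] at this
    exact this.eventually_lt_const hρ
  have hcone : ∀ᶠ k in l, ‖‖d‖ • a k - ‖a k‖ • d‖ ≤ δ * (‖a k‖ * ‖d‖) := by
    rcases eq_or_ne d 0 with rfl | hd
    · simp
    have hlhs : Tendsto (fun k => ‖‖d‖ • a k - ‖a k‖ • d‖) l (𝓝 0) := by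
      simpa using (((tendsto_const_nhds (x := ‖d‖)).smul ha).sub
        (ha.norm.smul (tendsto_const_nhds (x := d)))).norm
    have hrhs : Tendsto (fun k => δ * (‖a k‖ * ‖d‖)) l (𝓝 (δ * (‖d‖ * ‖d‖))) :=
      (ha.norm.mul_const _).const_mul δ
    exact (hlhs.eventually_lt hrhs (by positivity)).mono fun _ => le_of_lt
  filter_upwards [hsmall, hcone] with k hk hk'
  refine ⟨hk, ?_⟩
  have htk := (ht k).le
  rw [norm_smul, Real.norm_of_nonneg htk, smul_comm, mul_smul, ← smul_sub, norm_smul,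
    Real.norm_of_nonneg htk]
  calc t k * ‖‖d‖ • a k - ‖a k‖ • d‖ ≤ t k * (δ * (‖a k‖ * ‖d‖)) := by gcongr
    _ = δ * (t k * ‖a k‖ * ‖d‖) := by ring

end DirNbhd

section Preimage

variable {E F : Type*} [NormedAddCommGroup E] [InnerProductSpace ℝ E]
  [NormedAddCommGroup F] [InnerProductSpace ℝ F]
  {g : E → F} {g' : E → E →L[ℝ] F} {g'' : E →L[ℝ] E →L[ℝ] F} {Λ : Set F} {x d : E}

theorem tangentCone2_preimage_subset (hg : ∀ᶠ y in 𝓝 x, HasFDerivAt g (g' y) y)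
    (hg' : HasFDerivAt g' g'' x) :
    tangentCone2 {y | g y ∈ Λ} x d ⊆
      {w | g' x w + g'' d d ∈ tangentCone2 Λ (g x) (g' x d)} := by
  intro w hw
  obtain ⟨t, y, ht, ht0, hyF, hy⟩ := mem_tangentCone2_iff.1 hw
  exact mem_tangentCone2_iff.2 ⟨t, fun k => g (y k), ht, ht0, hyF,
    tendsto_secondOrderQuotient_apply hg hg' (fun k => (ht k).ne') ht0 hy⟩

theorem subset_tangentCone2_preimage (hg : ∀ᶠ y in 𝓝 x, HasFDerivAt g (g' y) y)
    (hg' : HasFDerivAt g' g'' x) (hx : g x ∈ Λ) (hreg : dirMetrSubreg g Λ x d) :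
    {w | g' x w + g'' d d ∈ tangentCone2 Λ (g x) (g' x d)} ⊆
      tangentCone2 {y | g y ∈ Λ} x d := by
  intro w hw
  obtain ⟨t, z, ht, ht0, hzΛ, hz⟩ := mem_tangentCone2_iff.1 hw
  obtain ⟨κ, hκ, ρ, hρ, δ, hδ, hsubreg⟩ := hreg
  set y := fun k => x + t k • d + (t k ^ 2 / 2) • w
  have hgy : Tendsto (fun k => secondOrderQuotient (g x) (g' x d) (t k) (g (y k))) atTop
      (𝓝 (g' x w + g'' d d)) :=
    tendsto_secondOrderQuotient_apply hg hg' (fun k => (ht k).ne') ht0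
      (by simpa only [y, secondOrderQuotient_add_smul_add (ht _).ne'] using tendsto_const_nhds)
  have hnear : ∀ᶠ k in atTop, y k - x ∈ dirNbhd ρ δ d := by
    have ha : Tendsto (fun k => d + (t k / 2) • w) atTop (𝓝 d) := by
      simpa using tendsto_const_nhds.add ((ht0.div_const 2).smul_const w)
    refine (eventually_smul_mem_dirNbhd hρ hδ ht ht0 ha).mono fun k hk => ?_
    convert hk using 1
    simp only [y, smul_add, smul_smul]
    ring_nf
    abel
  have hbound : ∀ᶠ k in atTop, infDist (y k) {y | g y ∈ Λ} / t k ^ 2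
      ≤ κ / 2 * dist (secondOrderQuotient (g x) (g' x d) (t k) (g (y k)))
          (secondOrderQuotient (g x) (g' x d) (t k) (z k)) := by
    filter_upwards [hnear] with k hk
    have htk := (ht k).ne'
    rw [dist_secondOrderQuotient htk, div_le_iff₀ (by positivity)]
    calc infDist (y k) {y | g y ∈ Λ} ≤ κ * infDist (g (y k)) Λ := hsubreg _ hk
      _ ≤ κ * dist (g (y k)) (z k) := by gcongr; exact infDist_le_dist_of_mem (hzΛ k)
      _ = _ := by field_simp
  refine mem_tangentCone2_of_tendsto_infDist_div_sq ⟨x, hx⟩ ht ht0 ?_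
  refine squeeze_zero' (.of_forall fun _ => div_nonneg infDist_nonneg (sq_nonneg _)) hbound ?_
  simpa using ((hgy.dist hz).const_mul (κ / 2))

end Preimage

theorem stmt_7_general {n m : ℕ} (g : EuclideanSpace ℝ (Fin n) → EuclideanSpace ℝ (Fin m))
    (hg : ContDiff ℝ 2 g) (Λ : Set (EuclideanSpace ℝ (Fin m)))
    (xb : EuclideanSpace ℝ (Fin n)) (hx : g xb ∈ Λ)
    (d : EuclideanSpace ℝ (Fin n))
    (hM : dirMetrSubreg g Λ xb d) :
    tangentCone2 {x | g x ∈ Λ} xb d =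
      {w | fderiv ℝ g xb w + iteratedFDeriv ℝ 2 g xb ![d, d] ∈
        tangentCone2 Λ (g xb) (fderiv ℝ g xb d)} := by
  have hg₁ : ∀ᶠ y in 𝓝 xb, HasFDerivAt g (fderiv ℝ g y) y :=
    .of_forall fun y => (hg.differentiable two_ne_zero y).hasFDerivAt
  have hg₂ : HasFDerivAt (fderiv ℝ g) (fderiv ℝ (fderiv ℝ g) xb) xb :=
    ((hg.fderiv_right one_add_one_eq_two.le).differentiable one_ne_zero xb).hasFDerivAt
  have hsecond : iteratedFDeriv ℝ 2 g xb ![d, d] = fderiv ℝ (fderiv ℝ g) xb d d :=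
    iteratedFDeriv_two_apply g xb ![d, d]
  rw [hsecond]
  exact (tangentCone2_preimage_subset hg₁ hg₂).antisymm
    (subset_tangentCone2_preimage hg₁ hg₂ hx hM)

theorem stmt_7 {n m : ℕ} (g : EuclideanSpace ℝ (Fin n) → EuclideanSpace ℝ (Fin m))
    (hg : ContDiff ℝ 2 g) (Λ : Set (EuclideanSpace ℝ (Fin m))) (hΛ : IsClosed Λ)
    (xb : EuclideanSpace ℝ (Fin n)) (hx : g xb ∈ Λ)
    (d : EuclideanSpace ℝ (Fin n)) (hd : fderiv ℝ g xb d ∈ tangentCone' Λ (g xb))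
    (hM : dirMetrSubreg g Λ xb d) :
    tangentCone2 {x | g x ∈ Λ} xb d =
      {w | fderiv ℝ g xb w + iteratedFDeriv ℝ 2 g xb ![d, d] ∈
        tangentCone2 Λ (g xb) (fderiv ℝ g xb d)} :=
  stmt_7_general g hg Λ xb hx d hM
end

section
/- For every nonempty closed set S ⊆ R^n and every λ ∈ R^n, the lower generalized support function satisfies σ̂_S(λ) ≤ σ_S(λ), where σ_S is the usual support function. -/
open Filter Topology Pointwise RealInnerProductSpace

/-!
Fix `u₀ ∈ S` and let `p r` be a nearest point of `S` to `u₀ + r • l`. Then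
`l_r := r⁻¹ • (u₀ + r • l - p r)` is a proximal, hence limiting, normal to `S` at `p r`.
Comparing with the distance to `u₀` gives `‖p r - u₀‖² ≤ 2r(σ_S(l) - ⟪l, u₀⟫)`, so `l_r → l`
as `r → ∞`, while `⟪l_r, p r⟫ ≤ σ_S(l) + ‖u₀‖ ‖l - l_r‖`. Hence along `l_r` the inner infimum
in `σ̂_S` is eventually at most `σ_S(l) + o(1)`.
-/

theorem IsClosed.exists_forall_norm_sub_le {E : Type*} [NormedAddCommGroup E] [ProperSpace E]
    {S : Set E} (hS : IsClosed S) (hne : S.Nonempty) (x : E) :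
    ∃ p ∈ S, ∀ y ∈ S, ‖x - p‖ ≤ ‖x - y‖ := by
  obtain ⟨p, hpS, hp⟩ := hS.exists_infDist_eq_dist hne x
  refine ⟨p, hpS, fun y hy => ?_⟩
  rw [← dist_eq_norm, ← dist_eq_norm, ← hp]
  exact Metric.infDist_le_dist_of_mem hy

theorem tendsto_zero_of_norm_sq_le_div {E : Type*} [NormedAddCommGroup E] {f : ℝ → E} {C : ℝ}
    (h : ∀ r > 0, ‖f r‖ ^ 2 ≤ C / r) : Tendsto f atTop (𝓝 0) := by
  have hbound : Tendsto (fun r : ℝ => √(C / r)) atTop (𝓝 0) := by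
    simpa using (tendsto_const_nhds.div_atTop tendsto_id).sqrt
  refine tendsto_zero_iff_norm_tendsto_zero.2
    (squeeze_zero' (Eventually.of_forall fun _ => norm_nonneg _) ?_ hbound)
  filter_upwards [eventually_gt_atTop 0] with r hr
  exact Real.le_sqrt_of_sq_le (h r hr)

section
variable {E : Type*} [NormedAddCommGroup E] [InnerProductSpace ℝ E]

theorem mem_frechetNormal_of_inner_le_sq {S : Set E} {x v : E} {σ : ℝ}
    (h : ∀ y ∈ S, ⟪v, y - x⟫ ≤ σ * ‖y - x‖ ^ 2) : v ∈ frechetNormal S x := by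
  intro ε hε
  refine ⟨ε / (|σ| + 1), by positivity, fun y hy hyx => ?_⟩
  have hσ : |σ| * ‖y - x‖ ≤ ε :=
    calc |σ| * ‖y - x‖ ≤ (|σ| + 1) * (ε / (|σ| + 1)) := by gcongr; linarith
      _ = ε := by field_simp
  calc ⟪v, y - x⟫ ≤ σ * ‖y - x‖ ^ 2 := h y hy
    _ ≤ |σ| * ‖y - x‖ * ‖y - x‖ := by rw [sq, ← mul_assoc]; gcongr; exact le_abs_self σ
    _ ≤ ε * ‖y - x‖ := by gcongr

theorem mem_limNormal_of_mem_frechetNormal {S : Set E} {x v : E} (hx : x ∈ S)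
    (hv : v ∈ frechetNormal S x) : v ∈ limNormal S x :=
  ⟨fun _ => x, fun _ => v, fun _ => hx, tendsto_const_nhds, tendsto_const_nhds, fun _ => hv⟩

theorem inner_sub_le_of_forall_norm_sub_le {S : Set E} {x p y : E}
    (hp : ∀ y ∈ S, ‖x - p‖ ≤ ‖x - y‖) (hy : y ∈ S) :
    ⟪x - p, y - p⟫ ≤ ‖y - p‖ ^ 2 / 2 := by
  have hsq : ‖x - p‖ ^ 2 ≤ ‖(x - p) - (y - p)‖ ^ 2 := by
    rw [sub_sub_sub_cancel_right]
    gcongr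
    exact hp y hy
  rw [norm_sub_sq_real (x - p) (y - p)] at hsq
  linarith

theorem smul_sub_mem_frechetNormal_of_forall_norm_sub_le {S : Set E} {x p : E}
    (hp : ∀ y ∈ S, ‖x - p‖ ≤ ‖x - y‖) {c : ℝ} (hc : 0 ≤ c) :
    c • (x - p) ∈ frechetNormal S p :=
  mem_frechetNormal_of_inner_le_sq (σ := c / 2) fun y hy => by
    rw [real_inner_smul_left]
    nlinarith [inner_sub_le_of_forall_norm_sub_le hp hy]

theorem norm_sub_sq_le_of_forall_norm_sub_le {S : Set E} {x p u : E}
    (hp : ∀ y ∈ S, ‖x - p‖ ≤ ‖x - y‖) (hu : u ∈ S) :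
    ‖p - u‖ ^ 2 ≤ 2 * ⟪x - u, p - u⟫ := by
  have hsq : ‖(x - u) - (p - u)‖ ^ 2 ≤ ‖x - u‖ ^ 2 := by
    rw [sub_sub_sub_cancel_right]
    gcongr
    exact hp u hu
  rw [norm_sub_sq_real (x - u) (p - u)] at hsq
  linarith

theorem norm_inv_smul_sub_sq_le_of_forall_norm_sub_le {S : Set E} {u₀ l p : E} {r m : ℝ}
    (hp : ∀ y ∈ S, ‖u₀ + r • l - p‖ ≤ ‖u₀ + r • l - y‖) (hu₀ : u₀ ∈ S) (hpm : ⟪l, p⟫ ≤ m)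
    (hr : 0 < r) : ‖r⁻¹ • (p - u₀)‖ ^ 2 ≤ 2 * (m - ⟪l, u₀⟫) / r := by
  have h := norm_sub_sq_le_of_forall_norm_sub_le hp hu₀
  rw [add_sub_cancel_left, real_inner_smul_left, inner_sub_right] at h
  rw [norm_smul, mul_pow, norm_inv, Real.norm_of_nonneg hr.le, le_div_iff₀ hr]
  field_simp
  nlinarith

theorem inner_sub_le_of_eq_add_smul {l e p u₀ : E} {r m : ℝ} (hpm : ⟪l, p⟫ ≤ m) (hr : 0 ≤ r)
    (hp : p = u₀ + r • e) : ⟪l - e, p⟫ ≤ m + ‖u₀‖ * ‖e‖ := by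
  have hinner : ⟪e, p⟫ = ⟪e, u₀⟫ + r * ‖e‖ ^ 2 := by
    rw [hp, inner_add_right, real_inner_smul_right, real_inner_self_eq_norm_sq]
  rw [inner_sub_left, hinner]
  nlinarith [neg_abs_le ⟪e, u₀⟫, abs_real_inner_le_norm e u₀, sq_nonneg ‖e‖]

theorem sigmaHat_le_of_forall_inner_le [ProperSpace E] {S : Set E} (hS : IsClosed S)
    {u₀ : E} (hu₀ : u₀ ∈ S) {l : E} {m : ℝ} (hm : ∀ u ∈ S, ⟪l, u⟫ ≤ m) :
    sigmaHat S l ≤ m := by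
  choose p hpS hp using fun r : ℝ => hS.exists_forall_norm_sub_le ⟨u₀, hu₀⟩ (u₀ + r • l)
  set e : ℝ → E := fun r => r⁻¹ • (p r - u₀) with he_def
  have hnormal : ∀ r > 0, l - e r ∈ limNormal S (p r) := by
    intro r hr
    have : l - e r = r⁻¹ • (u₀ + r • l - p r) := by
      simp only [he_def, smul_sub, smul_add, smul_smul, inv_mul_cancel₀ hr.ne', one_smul]
      abel
    rw [this]
    exact mem_limNormal_of_mem_frechetNormal (hpS r)
      (smul_sub_mem_frechetNormal_of_forall_norm_sub_le (hp r) (inv_nonneg.2 hr.le))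
  have hval : ∀ r > 0, ⟪l - e r, p r⟫ ≤ m + ‖u₀‖ * ‖e r‖ := fun r hr =>
    inner_sub_le_of_eq_add_smul (hm _ (hpS r)) hr.le (by simp [he_def, smul_smul, hr.ne'])
  have he : Tendsto e atTop (𝓝 0) := tendsto_zero_of_norm_sq_le_div fun r hr =>
    norm_inv_smul_sub_sq_le_of_forall_norm_sub_le (hp r) hu₀ (hm _ (hpS r)) hr
  have hl : Tendsto (fun r => l - e r) atTop (𝓝 l) := by
    simpa using tendsto_const_nhds.sub he
  have hbound : Tendsto (fun r => ((m + ‖u₀‖ * ‖e r‖ : ℝ) : EReal)) atTop (𝓝 m) :=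
    EReal.tendsto_coe.2 (by simpa using (he.norm.const_mul ‖u₀‖).const_add m)
  calc sigmaHat S l
      ≤ liminf (fun r => sInf ((fun u => ((⟪l - e r, u⟫ : ℝ) : EReal)) ''
          {u | l - e r ∈ limNormal S u})) atTop := hl.liminf_le_liminf_comp
    _ ≤ liminf (fun r => ((m + ‖u₀‖ * ‖e r‖ : ℝ) : EReal)) atTop := by
      refine liminf_le_liminf ?_
      filter_upwards [eventually_gt_atTop 0] with r hr
      exact (sInf_le (Set.mem_image_of_mem (x := p r) (fun u => ((⟪l - e r, u⟫ : ℝ) : EReal))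
        (hnormal r hr))).trans (EReal.coe_le_coe_iff.2 (hval r hr))
    _ = m := hbound.liminf_eq

theorem sigmaHat_le_suppFn [ProperSpace E] {S : Set E} (hS : IsClosed S) (hne : S.Nonempty)
    (l : E) : sigmaHat S l ≤ suppFn S l := by
  obtain ⟨u₀, hu₀⟩ := hne
  refine EReal.le_of_forall_lt_iff_le.1 fun m hm =>
    sigmaHat_le_of_forall_inner_le hS hu₀ fun u hu => ?_
  exact_mod_cast (le_sSup (Set.mem_image_of_mem _ hu)).trans hm.le

end

theorem stmt_11 {n : ℕ} (S : Set (EuclideanSpace ℝ (Fin n))) (hS : IsClosed S)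
    (hne : S.Nonempty) (l : EuclideanSpace ℝ (Fin n)) :
    sigmaHat S l ≤ suppFn S l :=
  sigmaHat_le_suppFn hS hne l
end

section
/- Let x̄ be a local optimal solution of min f(x) subject to g(x) ∈ Λ (f, g twice continuously differentiable, Λ closed), and suppose g(x) − Λ is metrically subregular at (x̄, 0) in direction d ∈ C(x̄) = {d : ∇g(x̄)d ∈ T_Λ(g(x̄)), ∇f(x̄)d ≤ 0}. Then for every w with ∇g(x̄)w + ∇²g(x̄)(d,d) ∈ T_Λ²(g(x̄); ∇g(x̄)d), one has ∇f(x̄)w + ∇²f(x̄)(d,d) ≥ 0. -/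
open Filter Topology Pointwise RealInnerProductSpace

/-! Along `x_k = x + t_k d + (t_k²/2) w`, the second-order Taylor expansion of `g` and the
definition of the outer second-order tangent set put `g x_k` within `o(t_k²)` of `Λ`. Since
`x_k - x` points in the direction `d`, directional metric subregularity yields feasible points
`y_k` with `‖y_k - x_k‖ = o(t_k²)`. As `f` is locally Lipschitz,
`f y_k = f x + t_k ∇f(x)d + (t_k²/2) (∇f(x)w + ∇²f(x)(d,d)) + o(t_k²)`, and `f y_k ≥ f x` together
with `∇f(x)d ≤ 0` forces the bracket to be nonnegative. -/

open Asymptotics Metric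

section Taylor
variable {E G : Type*} [NormedAddCommGroup E] [NormedSpace ℝ E]
  [NormedAddCommGroup G] [NormedSpace ℝ G]

theorem isLittleO_taylor_two_of_hasDerivAt {φ φ' : ℝ → G} {q : G}
    (hφ : ∀ t, HasDerivAt φ (φ' t) t) (hφ' : HasDerivAt φ' q 0) :
    (fun t => φ t - φ 0 - t • φ' 0 - (t ^ 2 / 2) • q) =o[𝓝 0] fun t => t ^ 2 := by
  have hψ : ∀ t, HasDerivAt (fun t => φ t - t • φ' 0 - (t ^ 2 / 2) • q)
      (φ' t - φ' 0 - t • q) t := by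
    intro t
    have hsq : HasDerivAt (fun t : ℝ => t ^ 2 / 2) t t := by
      simpa using (hasDerivAt_pow 2 t).div_const 2
    exact (((hφ t).sub ((hasDerivAt_id t).smul_const (φ' 0))).sub (hsq.smul_const q)).congr_deriv
      (by simp)
  have hψ' : (fun t => φ' t - φ' 0 - t • q) =o[𝓝[Set.univ] 0] fun t => (t - 0) ^ 1 := by
    simpa [nhdsWithin_univ] using hasDerivAt_iff_isLittleO.mp hφ'
  simpa [nhdsWithin_univ, sub_right_comm _ (φ 0)] using
    Convex.isLittleO_pow_succ_real convex_univ (Set.mem_univ 0)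
      (fun t _ => (hψ t).hasDerivWithinAt) hψ'

theorem ContDiff.isLittleO_taylor_two_parabola {h : E → G} (hh : ContDiff ℝ 2 h) (x d w : E) :
    (fun t : ℝ => h (x + t • d + (t ^ 2 / 2) • w) - h x - t • fderiv ℝ h x d
      - (t ^ 2 / 2) • (fderiv ℝ h x w + iteratedFDeriv ℝ 2 h x ![d, d]))
      =o[𝓝 0] fun t => t ^ 2 := by
  set c : ℝ → E := fun t => x + t • d + (t ^ 2 / 2) • w
  have hc : ∀ t, HasDerivAt c (d + t • w) t := by
    intro t
    have hsq : HasDerivAt (fun t : ℝ => t ^ 2 / 2) t t := by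
      simpa using (hasDerivAt_pow 2 t).div_const 2
    exact (((hasDerivAt_id t).smul_const d).const_add x |>.add (hsq.smul_const w)).congr_deriv
      (by simp)
  have hh' : ∀ y, HasFDerivAt h (fderiv ℝ h y) y :=
    fun y => (hh.differentiable two_ne_zero y).hasFDerivAt
  have hh'' : HasFDerivAt (fderiv ℝ h) (fderiv ℝ (fderiv ℝ h) x) x :=
    ((hh.fderiv_right (m := 1) (by norm_num)).differentiable one_ne_zero x).hasFDerivAt
  have hD : HasDerivAt (fun t => fderiv ℝ h (c t) (d + t • w))
      (fderiv ℝ (fderiv ℝ h) x d d + fderiv ℝ h x w) 0 := by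
    have hA := hh''.comp_hasDerivAt_of_eq 0 (hc 0) (by simp [c])
    have hB : HasDerivAt (fun t : ℝ => d + t • w) w 0 := by
      simpa using ((hasDerivAt_id (0 : ℝ)).smul_const w).const_add d
    simpa [c] using hA.clm_apply hB
  convert isLittleO_taylor_two_of_hasDerivAt (fun t => (hh' (c t)).comp_hasDerivAt t (hc t)) hD
    using 2 with t
  simp [c, iteratedFDeriv_two_apply, add_comm]

end Taylor

theorem exists_mem_isLittleO_dist_of_infDist {α : Type*} [PseudoMetricSpace α] {S : Set α}
    (hS : S.Nonempty) {x : ℕ → α} {r : ℕ → ℝ} (hr : ∀ k, 0 < r k)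
    (h : (fun k => infDist (x k) S) =o[atTop] r) :
    ∃ y : ℕ → α, (∀ k, y k ∈ S) ∧ (fun k => dist (x k) (y k)) =o[atTop] r := by
  -- the infimum need not be attained; overshoot it by `r k / (k + 1) = o(r k)`
  have hε : (fun k : ℕ => r k * (1 / ((k : ℝ) + 1))) =o[atTop] r := by
    simpa using (isBigO_refl r atTop).mul_isLittleO
      ((isLittleO_one_iff ℝ).mpr tendsto_one_div_add_atTop_nhds_zero_nat)
  choose y hyS hy using fun k => (infDist_lt_iff hS).mp
    (lt_add_of_pos_right (infDist (x k) S) (mul_pos (hr k) (by positivity : 0 < 1 / ((k : ℝ) + 1))))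
  refine ⟨y, hyS, IsBigO.trans_isLittleO (IsBigO.of_bound' ?_) (h.add hε)⟩
  filter_upwards with k
  rw [Real.norm_of_nonneg dist_nonneg,
    Real.norm_of_nonneg (add_nonneg infDist_nonneg (mul_pos (hr k) (by positivity)).le)]
  exact (hy k).le

theorem nonneg_of_eventually_nonneg_mul_add_isLittleO {ι : Type*} {l : Filter ι} [l.NeBot]
    {r e : ι → ℝ} {q : ℝ} (hr : ∀ᶠ i in l, 0 < r i) (he : e =o[l] r)
    (h : ∀ᶠ i in l, 0 ≤ r i * q + e i) : 0 ≤ q := by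
  by_contra! hq
  obtain ⟨i, hri, hei, hi⟩ :=
    (hr.and ((he.def (c := -q / 2) (by linarith)).and h)).exists
  rw [Real.norm_eq_abs, Real.norm_of_nonneg hri.le] at hei
  nlinarith [le_abs_self (e i)]

section Directional
variable {ι E F : Type*} [NormedAddCommGroup E] [InnerProductSpace ℝ E]
  [NormedAddCommGroup F] {l : Filter ι}

theorem eventually_smul_mem_dirNbhd_s15 {s : ι → ℝ} {u : ι → E} {d : E} {ρ δ : ℝ}
    (hs : ∀ i, 0 ≤ s i) (hs0 : Tendsto s l (𝓝 0)) (hu : Tendsto u l (𝓝 d))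
    (hρ : 0 < ρ) (hδ : 0 < δ) : ∀ᶠ i in l, s i • u i ∈ dirNbhd ρ δ d := by
  have hsmall : ∀ᶠ i in l, ‖s i • u i‖ < ρ := by
    have := (hs0.smul hu).norm
    rw [zero_smul, norm_zero] at this
    exact this.eventually_lt_const hρ
  -- the angle condition is homogeneous in `s i`, and at `u i = d` it holds with slack when `d ≠ 0`
  have hangle : ∀ᶠ i in l, ‖‖d‖ • u i - ‖u i‖ • d‖ ≤ δ * (‖u i‖ * ‖d‖) := by
    rcases eq_or_ne d 0 with rfl | hd
    · simp
    have hlhs : Tendsto (fun i => ‖‖d‖ • u i - ‖u i‖ • d‖) l (𝓝 0) := by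
      simpa using ((hu.const_smul ‖d‖).sub (hu.norm.smul_const d)).norm
    have hrhs : Tendsto (fun i => δ * (‖u i‖ * ‖d‖)) l (𝓝 (δ * (‖d‖ * ‖d‖))) :=
      (hu.norm.mul_const _).const_mul δ
    exact (hlhs.eventually_lt hrhs (by positivity)).mono fun _ h => h.le
  filter_upwards [hsmall, hangle] with i hi hi'
  refine ⟨hi, ?_⟩
  have hsu : ‖d‖ • (s i • u i) - ‖s i • u i‖ • d = s i • (‖d‖ • u i - ‖u i‖ • d) := by
    rw [norm_smul, Real.norm_of_nonneg (hs i)]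
    module
  rw [hsu, norm_smul, norm_smul, Real.norm_of_nonneg (hs i)]
  nlinarith [hs i]

theorem dirMetrSubreg.isLittleO_infDist {g : E → F} {Λ : Set F} {x d : E}
    (hM : dirMetrSubreg g Λ x d) {s : ι → ℝ} {u : ι → E} {r : ι → ℝ}
    (hs : ∀ i, 0 ≤ s i) (hs0 : Tendsto s l (𝓝 0)) (hu : Tendsto u l (𝓝 d))
    (hg : (fun i => infDist (g (x + s i • u i)) Λ) =o[l] r) :
    (fun i => infDist (x + s i • u i) {z | g z ∈ Λ}) =o[l] r := by
  obtain ⟨κ, -, ρ, hρ, δ, hδ, hκ⟩ := hM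
  refine IsBigO.trans_isLittleO (IsBigO.of_bound κ ?_) hg
  filter_upwards [eventually_smul_mem_dirNbhd_s15 hs hs0 hu hρ hδ] with i hi
  simpa [abs_of_nonneg infDist_nonneg] using hκ _ (by simpa using hi)

end Directional

section SecondOrder
variable {E F : Type*} [NormedAddCommGroup E] [InnerProductSpace ℝ E]
  [NormedAddCommGroup F] [InnerProductSpace ℝ F]

theorem exists_isLittleO_infDist_of_mem_tangentCone2 {S : Set F} {y v z : F}
    (hz : z ∈ tangentCone2 S y v) :
    ∃ t : ℕ → ℝ, (∀ k, 0 < t k) ∧ Tendsto t atTop (𝓝 0) ∧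
      (fun k => infDist (y + t k • v + (t k ^ 2 / 2) • z) S) =o[atTop] fun k => t k ^ 2 := by
  obtain ⟨t, zk, ht, ht0, hzk, hmem⟩ := hz
  refine ⟨t, ht, ht0, ?_⟩
  have hzz : Tendsto (fun k => ‖z - zk k‖ / 2) atTop (𝓝 0) := by
    simpa using ((tendsto_const_nhds (x := z)).sub hzk).norm.div_const 2
  have hsmall : (fun k => ‖z - zk k‖ / 2 * t k ^ 2) =o[atTop] fun k => t k ^ 2 := by
    simpa using ((isLittleO_one_iff ℝ).mpr hzz).mul_isBigO (isBigO_refl (fun k => t k ^ 2) atTop)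
  refine IsBigO.trans_isLittleO (IsBigO.of_bound' ?_) hsmall
  filter_upwards with k
  calc ‖infDist (y + t k • v + (t k ^ 2 / 2) • z) S‖
      ≤ dist (y + t k • v + (t k ^ 2 / 2) • z) (y + t k • v + (t k ^ 2 / 2) • zk k) := by
        rw [Real.norm_of_nonneg infDist_nonneg]
        exact infDist_le_dist_of_mem (hmem k)
    _ = ‖‖z - zk k‖ / 2 * t k ^ 2‖ := by
        rw [dist_add_left, dist_eq_norm, ← smul_sub, norm_smul, Real.norm_of_nonneg (by positivity),
          Real.norm_of_nonneg (by positivity)]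
        ring

theorem ContDiff.exists_isLittleO_infDist_comp_of_mem_tangentCone2 {g : E → F} (hg : ContDiff ℝ 2 g)
    {Λ : Set F} {x d w : E}
    (hw : fderiv ℝ g x w + iteratedFDeriv ℝ 2 g x ![d, d] ∈
      tangentCone2 Λ (g x) (fderiv ℝ g x d)) :
    ∃ t : ℕ → ℝ, (∀ k, 0 < t k) ∧ Tendsto t atTop (𝓝 0) ∧
      (fun k => infDist (g (x + t k • d + (t k ^ 2 / 2) • w)) Λ) =o[atTop] fun k => t k ^ 2 := by
  set z := fderiv ℝ g x w + iteratedFDeriv ℝ 2 g x ![d, d]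
  obtain ⟨t, ht, ht0, hΛ⟩ := exists_isLittleO_infDist_of_mem_tangentCone2 hw
  refine ⟨t, ht, ht0, ?_⟩
  have hgT := (hg.isLittleO_taylor_two_parabola x d w).comp_tendsto ht0
  refine IsBigO.trans_isLittleO (IsBigO.of_bound' ?_) (hΛ.norm_left.add hgT.norm_left)
  filter_upwards with k
  rw [Real.norm_of_nonneg infDist_nonneg, Real.norm_of_nonneg (by positivity),
    Real.norm_of_nonneg infDist_nonneg]
  refine (infDist_le_infDist_add_dist
    (y := g x + t k • fderiv ℝ g x d + (t k ^ 2 / 2) • z)).trans_eq ?_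
  rw [dist_eq_norm]
  congr 2
  simp only [Function.comp_apply]
  abel

theorem IsLocalMinOn.secondOrder_nonneg_of_dirMetrSubreg {f : E → ℝ} {g : E → F}
    (hf : ContDiff ℝ 2 f) (hg : ContDiff ℝ 2 g) {Λ : Set F} {x d w : E} (hx : g x ∈ Λ)
    (hmin : IsLocalMinOn f {x' | g x' ∈ Λ} x) (hd : fderiv ℝ f x d ≤ 0)
    (hM : dirMetrSubreg g Λ x d)
    (hw : fderiv ℝ g x w + iteratedFDeriv ℝ 2 g x ![d, d] ∈
      tangentCone2 Λ (g x) (fderiv ℝ g x d)) :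
    0 ≤ fderiv ℝ f x w + iteratedFDeriv ℝ 2 f x ![d, d] := by
  obtain ⟨t, ht, ht0, hgΛ⟩ := hg.exists_isLittleO_infDist_comp_of_mem_tangentCone2 hw
  set xk : ℕ → E := fun k => x + t k • d + (t k ^ 2 / 2) • w
  have hxk : ∀ k, xk k = x + t k • (d + (t k / 2) • w) := fun k => by simp only [xk]; module
  have hu : Tendsto (fun k => d + (t k / 2) • w) atTop (𝓝 d) := by
    simpa using tendsto_const_nhds.add ((ht0.div_const 2).smul_const w)
  have hF : (fun k => infDist (xk k) {x' | g x' ∈ Λ}) =o[atTop] fun k => t k ^ 2 := by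
    simp only [xk, hxk] at hgΛ ⊢
    exact hM.isLittleO_infDist (fun k => (ht k).le) ht0 hu hgΛ
  obtain ⟨y, hyF, hy⟩ :=
    exists_mem_isLittleO_dist_of_infDist ⟨x, hx⟩ (fun k => pow_pos (ht k) 2) hF
  have hyx : (fun k => y k - xk k) =o[atTop] fun k => t k ^ 2 := by
    simpa only [dist_comm, dist_eq_norm, isLittleO_norm_left] using hy
  have hxk_lim : Tendsto xk atTop (𝓝 x) := by
    simpa [xk] using (tendsto_const_nhds (x := x)).add (ht0.smul_const d) |>.add
      (((ht0.pow 2).div_const 2).smul_const w)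
  have hy_lim : Tendsto y atTop (𝓝 x) := by
    simpa using hxk_lim.add (hyx.trans_tendsto (by simpa using ht0.pow 2))
  have hfy : ∀ᶠ k in atTop, f x ≤ f (y k) :=
    (tendsto_nhdsWithin_iff.mpr ⟨hy_lim, .of_forall hyF⟩).eventually hmin
  have hfyx : (fun k => f (y k) - f (xk k)) =o[atTop] fun k => t k ^ 2 :=
    ((hf.contDiffAt.hasStrictFDerivAt (by norm_num)).isBigO_sub.comp_tendsto
      (hy_lim.prodMk_nhds hxk_lim)).trans_isLittleO hyx
  have hfT := (hf.isLittleO_taylor_two_parabola x d w).comp_tendsto ht0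
  have hq := nonneg_of_eventually_nonneg_mul_add_isLittleO
    (q := (fderiv ℝ f x w + iteratedFDeriv ℝ 2 f x ![d, d]) / 2)
    (.of_forall fun k => pow_pos (ht k) 2) (hfT.add hfyx) ?_
  · linarith
  filter_upwards [hfy] with k hk
  have := mul_nonpos_of_nonneg_of_nonpos (ht k).le hd
  simp only [Function.comp_apply, smul_eq_mul, xk] at hk ⊢
  linarith

end SecondOrder

theorem stmt_15_general {n m : ℕ} (f : EuclideanSpace ℝ (Fin n) → ℝ)
    (g : EuclideanSpace ℝ (Fin n) → EuclideanSpace ℝ (Fin m))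
    (hf : ContDiff ℝ 2 f) (hg : ContDiff ℝ 2 g)
    (Λ : Set (EuclideanSpace ℝ (Fin m)))
    (xb : EuclideanSpace ℝ (Fin n)) (hx : g xb ∈ Λ)
    (hmin : IsLocalMinOn f {x | g x ∈ Λ} xb)
    (d : EuclideanSpace ℝ (Fin n))
    (hd2 : fderiv ℝ f xb d ≤ 0)
    (hM : dirMetrSubreg g Λ xb d) :
    ∀ w : EuclideanSpace ℝ (Fin n),
      fderiv ℝ g xb w + iteratedFDeriv ℝ 2 g xb ![d, d] ∈
        tangentCone2 Λ (g xb) (fderiv ℝ g xb d) →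
      0 ≤ fderiv ℝ f xb w + iteratedFDeriv ℝ 2 f xb ![d, d] :=
  fun _ hw => hmin.secondOrder_nonneg_of_dirMetrSubreg hf hg hx hd2 hM hw

theorem stmt_15 {n m : ℕ} (f : EuclideanSpace ℝ (Fin n) → ℝ)
    (g : EuclideanSpace ℝ (Fin n) → EuclideanSpace ℝ (Fin m))
    (hf : ContDiff ℝ 2 f) (hg : ContDiff ℝ 2 g)
    (Λ : Set (EuclideanSpace ℝ (Fin m))) (hΛ : IsClosed Λ)
    (xb : EuclideanSpace ℝ (Fin n)) (hx : g xb ∈ Λ)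
    (hmin : IsLocalMinOn f {x | g x ∈ Λ} xb)
    (d : EuclideanSpace ℝ (Fin n))
    (hd1 : fderiv ℝ g xb d ∈ tangentCone' Λ (g xb)) (hd2 : fderiv ℝ f xb d ≤ 0)
    (hM : dirMetrSubreg g Λ xb d) :
    ∀ w : EuclideanSpace ℝ (Fin n),
      fderiv ℝ g xb w + iteratedFDeriv ℝ 2 g xb ![d, d] ∈
        tangentCone2 Λ (g xb) (fderiv ℝ g xb d) →
      0 ≤ fderiv ℝ f xb w + iteratedFDeriv ℝ 2 f xb ![d, d] :=
  stmt_15_general f g hf hg Λ xb hx hmin d hd2 hM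
end

section
/- For the closed set S := {0} ∪ {1/n : n ∈ N, n ≥ 1} ⊆ R, the Bouligand tangent cone at 0 is T_S(0) = R₊, and the directional limiting normal cone at 0 in direction d = 1 is N_S(0; 1) = R, so that N_{T_S(0)}(1) = {0} is strictly contained in N_S(0; 1). -/
open Filter Topology Pointwise RealInnerProductSpace

lemma aux_isolated (S : Set ℝ) (x : ℝ) (δ₀ : ℝ) (hδ₀ : 0 < δ₀)
    (hiso : ∀ y ∈ S, |y - x| ≤ δ₀ → y = x) (v : ℝ) : v ∈ frechetNormal S x := by
  intro ε hε
  refine ⟨δ₀, hδ₀, fun y hy hle => ?_⟩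
  have : y = x := hiso y hy (by simpa [Real.norm_eq_abs] using hle)
  simp [this]

lemma aux_interior (x : ℝ) (hx : 0 < x) (v : ℝ) (hv : v ∈ frechetNormal (Set.Ici 0) x) :
    v = 0 := by
  have habs : ∀ ε > (0:ℝ), |v| ≤ ε := by
    intro ε hε
    obtain ⟨δ, hδ, h⟩ := hv ε hε
    set h₀ := min δ x with hh
    have hh0 : 0 < h₀ := lt_min hδ hx
    have hhδ : h₀ ≤ δ := min_le_left δ x
    have hhx : h₀ ≤ x := min_le_right δ x
    have h1 : v * h₀ ≤ ε * h₀ := by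
      have := h (x + h₀) (by simp; positivity)
        (by rw [show x + h₀ - x = h₀ by ring, Real.norm_eq_abs, abs_of_pos hh0]; exact hhδ)
      rw [show x + h₀ - x = h₀ by ring, Real.norm_eq_abs, abs_of_pos hh0,
        RCLike.inner_apply] at this
      simp at this; linarith
    have h2 : -(v * h₀) ≤ ε * h₀ := by
      have := h (x - h₀) (by simp; linarith)
        (by rw [show x - h₀ - x = -h₀ by ring, Real.norm_eq_abs, abs_neg, abs_of_pos hh0]; exact hhδ)
      rw [show x - h₀ - x = -h₀ by ring, Real.norm_eq_abs, abs_neg, abs_of_pos hh0,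
        RCLike.inner_apply] at this
      simp at this; linarith
    have hb : |v * h₀| ≤ ε * h₀ := abs_le.mpr ⟨by linarith, h1⟩
    calc |v| = |v * h₀| / h₀ := by rw [abs_mul, abs_of_pos hh0]; field_simp
    _ ≤ ε * h₀ / h₀ := by gcongr
    _ = ε := by field_simp
  by_contra hne
  have := habs (|v|/2) (by positivity)
  have : 0 < |v| := abs_pos.mpr hne
  linarith [habs (|v|/2) (by positivity : (0:ℝ) < |v|/2)]

lemma aux_sep (m k : ℕ) (hne : m ≠ k) :
    (1:ℝ)/((k+1)*(k+2)) ≤ |(1:ℝ)/(m+1) - 1/(k+1)| := by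
  have hk1 : (0:ℝ) < k+1 := by positivity
  have hk2 : (0:ℝ) < k+2 := by positivity
  have hm1 : (0:ℝ) < m+1 := by positivity
  rcases lt_or_gt_of_ne hne with h | h
  · have hmk : (m:ℝ) + 1 ≤ k := by exact_mod_cast h
    have hlt : (1:ℝ)/(k+1) < 1/(m+1) := one_div_lt_one_div_of_lt hm1 (by linarith)
    rw [abs_of_pos (by linarith)]
    rw [div_sub_div _ _ (ne_of_gt hm1) (ne_of_gt hk1),
      div_le_div_iff₀ (by positivity) (by positivity)]
    have h1 := mul_le_mul_of_nonneg_right (show (1:ℝ) ≤ (k:ℝ)-(m:ℝ) by linarith)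
      (le_of_lt (mul_pos hk1 hk2))
    have h2 : ((m:ℝ)+1)*(k+1) ≤ (k+1)*(k+2) := by nlinarith
    nlinarith [h1, h2]
  · have hmk : (k:ℝ) + 1 ≤ m := by exact_mod_cast h
    have hlt : (1:ℝ)/(m+1) < 1/(k+1) := one_div_lt_one_div_of_lt hk1 (by linarith)
    rw [abs_of_neg (by linarith), neg_sub]
    rw [div_sub_div _ _ (ne_of_gt hk1) (ne_of_gt hm1),
      div_le_div_iff₀ (by positivity) (by positivity)]
    have e : ((m:ℝ)-k)*((k:ℝ)+2) - ((m:ℝ)+1) = (k+1)*((m:ℝ)-k-1) := by ring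
    have h0 : (0:ℝ) ≤ (k+1)*((m:ℝ)-k-1) := mul_nonneg (le_of_lt hk1) (by linarith)
    have h1 : ((m:ℝ)+1) ≤ ((m:ℝ)-k)*((k:ℝ)+2) := by linarith
    nlinarith [mul_le_mul_of_nonneg_left h1 (le_of_lt hk1)]

theorem stmt_17 (S : Set ℝ) (hS : S = {0} ∪ Set.range (fun k : ℕ => (1:ℝ) / (k + 1))) :
    tangentCone' S 0 = Set.Ici (0:ℝ) ∧
    dirLimNormal S 0 1 = Set.univ ∧
    limNormal (tangentCone' S 0) 1 = {0} ∧
    limNormal (tangentCone' S 0) 1 ⊂ dirLimNormal S 0 1 := by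
  have hSnonneg : ∀ y ∈ S, (0:ℝ) ≤ y := by
    intro y hy
    rw [hS] at hy
    rcases hy with h | ⟨m, rfl⟩
    · simp at h; simp [h]
    · positivity
  -- Part 1
  have hT : tangentCone' S 0 = Set.Ici (0:ℝ) := by
    ext d
    constructor
    · rintro ⟨t, v, hpos, ht, hv, hmem⟩
      have hvk : ∀ k, 0 ≤ v k := by
        intro k
        have h1 : 0 ≤ t k * v k := by
          have := hSnonneg _ (hmem k)
          simpa using this
        exact nonneg_of_mul_nonneg_left (by rwa [mul_comm] at h1) (hpos k)
      exact ge_of_tendsto' hv hvk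
    · intro hd
      rcases eq_or_lt_of_le (Set.mem_Ici.mp hd) with h | h
      · refine ⟨fun k => 1/(k+1), fun _ => 0, fun k => by positivity,
          tendsto_one_div_add_atTop_nhds_zero_nat, ?_, fun k => by simp [hS]⟩
        rw [← h]; exact tendsto_const_nhds
      · refine ⟨fun k => (1/(k+1)) * d⁻¹, fun _ => d, fun k => by positivity, ?_,
          tendsto_const_nhds, fun k => ?_⟩
        · simpa using tendsto_one_div_add_atTop_nhds_zero_nat.mul_const d⁻¹
        · have : (0:ℝ) + ((1/(k+1)) * d⁻¹) • d = 1/(k+1) := by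
            rw [zero_add, smul_eq_mul, mul_assoc, inv_mul_cancel₀ (ne_of_gt h), mul_one]
          rw [this, hS]
          exact Or.inr ⟨k, rfl⟩
  -- isolation of each 1/(k+1)
  have hiso : ∀ k : ℕ, ∀ y ∈ S, |y - 1/(k+1)| ≤ 1/(2*((k+1)*(k+2))) → y = 1/((k:ℝ)+1) := by
    intro k y hy hle
    have hk1 : (0:ℝ) < k+1 := by positivity
    have hk2 : (0:ℝ) < k+2 := by positivity
    rw [hS] at hy
    rcases hy with h | ⟨m, rfl⟩
    · exfalso
      simp only [Set.mem_singleton_iff] at h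
      subst h
      rw [zero_sub, abs_neg, abs_of_pos (by positivity)] at hle
      rw [div_le_div_iff₀ hk1 (by positivity)] at hle
      nlinarith
    · by_cases hmk : m = k
      · subst hmk; rfl
      · exfalso
        have := aux_sep m k hmk
        have h1 : (1:ℝ)/((k+1)*(k+2)) ≤ 1/(2*((k+1)*(k+2))) := le_trans this hle
        rw [div_le_div_iff₀ (by positivity) (by positivity)] at h1
        nlinarith
  -- Part 2
  have hN : dirLimNormal S 0 1 = Set.univ := by
    ext v
    simp only [Set.mem_univ, iff_true]
    refine ⟨fun k => 1/(k+1), fun _ => 1, fun _ => v, fun k => by positivity,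
      tendsto_one_div_add_atTop_nhds_zero_nat, tendsto_const_nhds, tendsto_const_nhds,
      fun k => ?_⟩
    have := aux_isolated S (1/((k:ℝ)+1)) (1/(2*(((k:ℝ)+1)*((k:ℝ)+2)))) (by positivity)
      (hiso k) v
    simpa using this
  -- Part 3
  have hL : limNormal (tangentCone' S 0) 1 = {0} := by
    rw [hT]
    ext v
    constructor
    · rintro ⟨xk, vk, hxS, hxlim, hvlim, hfn⟩
      have hev : ∀ᶠ k in atTop, 0 < xk k :=
        hxlim.eventually (eventually_gt_nhds (by norm_num : (0:ℝ) < 1))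
      have hev0 : ∀ᶠ k in atTop, vk k = 0 :=
        hev.mono fun k hk => aux_interior _ hk _ (hfn k)
      have : Tendsto vk atTop (𝓝 0) :=
        Tendsto.congr' (hev0.mono fun k h => h.symm) tendsto_const_nhds
      exact tendsto_nhds_unique hvlim this
    · rintro rfl
      refine ⟨fun _ => 1, fun _ => 0, fun _ => by norm_num, tendsto_const_nhds,
        tendsto_const_nhds, fun k => ?_⟩
      intro ε hε
      exact ⟨1, one_pos, fun y hy hle => by
        simp only [RCLike.inner_apply, map_zero, zero_mul, mul_zero]
        positivity⟩
  refine ⟨hT, hN, hL, ?_⟩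
  rw [hL, hN]
  refine ⟨Set.subset_univ _, fun h => ?_⟩
  have : (1:ℝ) ∈ ({0} : Set ℝ) := h (Set.mem_univ 1)
  simp at this
end
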